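/- arXiv:1112.2273 — 5 statements merged into one kernel-verified Lean document; each statement's English description precedes it below -/
import Mathlib

section
/- Let H be a finite undirected graph on vertex set V, let P ⊆ V × V be a set of ordered pairs, and let r : V × V → ℕ be the demand function with r(u,v) = 1 if (u,v) ∈ P and r(u,v) = 0 otherwise (so r_max = 1). If H covers f_r, i.e. d_H(X) ≥ f_r(X) for every X ⊆ V, then H has an orientation D that contains a directed path from u to v for every pair (u,v) ∈ P. -/
/-- `D` is an orientation of the undirected graph `H`: each edge of `H` is assigned
exactly one of its two possible directions. -/
def IsOrientation {V : Type*} (H : SimpleGraph V) (D : V → V → Prop) : Prop :=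
  ∀ u v : V, (H.Adj u v ↔ (D u v ∨ D v u)) ∧ ¬ (D u v ∧ D v u)

/-- `d_H(X)`: the number of edges of `H` with exactly one endpoint in `X`. -/
noncomputable def cutCard {V : Type*} (H : SimpleGraph V) (X : Set V) : ℕ :=
  {e | e ∈ H.edgeSet ∧ ∃ a ∈ X, ∃ b ∉ X, e = s(a, b)}.ncard

/-- The set function `f_r`: `f_r(X) = max {r u v | u ∈ X, v ∉ X} + max {r v u | u ∈ X, v ∉ X}`
(with the convention that the maximum of the empty set is `0`, so `f_r ∅ = f_r V = 0`). -/
noncomputable def frDemand {V : Type*} (r : V → V → ℕ) (X : Set V) : ℕ :=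
  sSup {n | ∃ u ∈ X, ∃ v ∉ X, n = r u v} + sSup {n | ∃ u ∈ X, ∃ v ∉ X, n = r v u}


open Classical

/-!
Every demand pair lies in one component of `H` (a cut separating it would have `d_H = 0`), and
no bridge is crossed by demand pairs in both directions (the side of the bridge would have
`d_H = 1 < 2 ≤ f_r`). Orient each bridge in the direction of the pairs crossing it, then extend
to the remaining edges as in Robbins' theorem: following Boesch and Tindell, orient the edges one
at a time so that the endpoints of every non-bridge edge stay mutually reachable in the mixed
graph. A path from `u` to `v` in `H` is then traversed forwards across each bridge, and every
non-bridge edge on it can be replaced by a directed path.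
-/

open Relation

theorem Relation.ReflTransGen.cases_of_le_or_pair {α : Type*} {R T : α → α → Prop}
    {a b x y : α}
    (hR : ∀ x y, R x y → T x y ∨ (x = a ∧ y = b) ∨ (x = b ∧ y = a))
    (hab : ¬ReflTransGen T a b) (hba : ¬ReflTransGen T b a) (h : ReflTransGen R x y) :
    ReflTransGen T x y ∨ (ReflTransGen T x a ∧ ReflTransGen T b y) ∨
      (ReflTransGen T x b ∧ ReflTransGen T a y) := by
  induction h using ReflTransGen.head_induction_on with
  | refl => exact .inl .refl
  | head hxz _ ih =>
    rcases hR _ _ hxz with hT | ⟨rfl, rfl⟩ | ⟨rfl, rfl⟩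
    · exact ih.imp (.head hT ·) (Or.imp (And.imp_left (.head hT ·)) (And.imp_left (.head hT ·)))
    · rcases ih with h | ⟨h, -⟩ | ⟨-, h⟩
      exacts [.inr (.inl ⟨.refl, h⟩), absurd h hba, .inl h]
    · rcases ih with h | ⟨-, h⟩ | ⟨h, -⟩
      exacts [.inr (.inr ⟨.refl, h⟩), .inl h, absurd h hab]

namespace SimpleGraph

variable {V : Type*} {G : SimpleGraph V}

theorem Walk.reflTransGen_of_forall_darts {R : V → V → Prop} {u v : V} (p : G.Walk u v)
    (h : ∀ d ∈ p.darts, ReflTransGen R d.fst d.snd) : ReflTransGen R u v := by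
  induction p with
  | nil => exact .refl
  | cons _ _ ih =>
    simp only [darts_cons, List.mem_cons, forall_eq_or_imp] at h
    exact h.1.trans (ih h.2)

theorem Walk.IsTrail.reachable_deleteEdges_of_mem_darts {u v : V} {p : G.Walk u v}
    (hp : p.IsTrail) {d : G.Dart} (hd : d ∈ p.darts) :
    (G.deleteEdges {d.edge}).Reachable u d.fst ∧ (G.deleteEdges {d.edge}).Reachable d.snd v := by
  induction p with
  | nil => simp at hd
  | @cons u w v huw p ih =>
    rw [isTrail_cons] at hp
    rw [darts_cons, List.mem_cons] at hd
    rcases hd with rfl | hd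
    · exact ⟨.rfl, reachable_deleteEdges_iff_exists_walk.2 ⟨p, hp.2⟩⟩
    · have hne : s(u, w) ≠ d.edge := fun h =>
        hp.2 (h ▸ p.edges_eq_map_darts ▸ List.mem_map_of_mem hd)
      have huw' : (G.deleteEdges {d.edge}).Adj u w := by simpa [huw] using hne
      exact (ih hp.1 hd).imp_left huw'.reachable.trans

theorem exists_walk_forall_darts_not_isBridge {x y : V} (hxy : G.Adj x y)
    (hb : ¬G.IsBridge s(x, y)) :
    ∃ p : G.Walk x y, ∀ d ∈ p.darts, d.edge ≠ s(x, y) ∧ ¬G.IsBridge d.edge := by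
  obtain ⟨p, hp⟩ : ∃ p : G.Walk x y, s(x, y) ∉ p.edges := by
    simpa [isBridge_iff_forall_walk_mem_edges] using hb
  have hq : s(x, y) ∉ p.bypass.edges := fun h => hp (p.edges_bypass_subset_edges h)
  have hc : (Walk.cons hxy.symm p.bypass).IsCycle :=
    (Walk.cons_isCycle_iff _ _).2 ⟨p.bypass_isPath, by rwa [Sym2.eq_swap]⟩
  refine ⟨p.bypass, fun d hd => ?_⟩
  have hd' : d.edge ∈ p.bypass.edges := p.bypass.edges_eq_map_darts ▸ List.mem_map_of_mem hd
  exact ⟨fun h => hq (h ▸ hd'), fun hbd => hbd.notMem_edges_of_isCycle hc (by simp [hd'])⟩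

def mixedStep (G : SimpleGraph V) (D : V → V → Prop) (x y : V) : Prop :=
  D x y ∨ (G.Adj x y ∧ ¬D x y ∧ ¬D y x)

def mixedStepOff (G : SimpleGraph V) (D : V → V → Prop) (e : Sym2 V) (x y : V) : Prop :=
  G.mixedStep D x y ∧ s(x, y) ≠ e

def IsPartialOrientation (G : SimpleGraph V) (D : V → V → Prop) : Prop :=
  ∀ x y, (D x y → G.Adj x y) ∧ ¬(D x y ∧ D y x)

def MixedReachableOnNonBridges (G : SimpleGraph V) (D : V → V → Prop) : Prop :=
  ∀ x y, G.Adj x y → ¬G.IsBridge s(x, y) → ReflTransGen (G.mixedStep D) x y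

def addArc (D : V → V → Prop) (a b : V) (x y : V) : Prop :=
  D x y ∨ (x = a ∧ y = b)

variable {D : V → V → Prop} {a b : V}

theorem mixedStep_addArc_iff {x y : V} (h : s(x, y) ≠ s(a, b)) :
    G.mixedStep (addArc D a b) x y ↔ G.mixedStep D x y := by
  have hab : ¬(x = a ∧ y = b) := fun ⟨hx, hy⟩ => h (by rw [hx, hy])
  have hba : ¬(y = a ∧ x = b) := fun ⟨hy, hx⟩ => h (by rw [hx, hy, Sym2.eq_swap])
  simp only [mixedStep, addArc, hab, hba, or_false]

theorem isPartialOrientation_addArc (hD : G.IsPartialOrientation D) (hab : G.Adj a b)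
    (hba : ¬D b a) : G.IsPartialOrientation (addArc D a b) := by
  intro x y
  refine ⟨?_, ?_⟩
  · rintro (h | ⟨rfl, rfl⟩)
    exacts [(hD x y).1 h, hab]
  · rintro ⟨h | ⟨rfl, rfl⟩, h' | ⟨hy, hx⟩⟩
    · exact (hD x y).2 ⟨h, h'⟩
    · exact hba (hx ▸ hy ▸ h)
    · exact hba h'
    · exact hab.ne hx

theorem mixedReachableOnNonBridges_addArc (hD : G.MixedReachableOnNonBridges D)
    (hba : ReflTransGen (G.mixedStepOff D s(a, b)) b a) :
    G.MixedReachableOnNonBridges (addArc D a b) := by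
  have hoff : G.mixedStepOff D s(a, b) ≤ G.mixedStep (addArc D a b) :=
    fun x y h => (mixedStep_addArc_iff h.2).2 h.1
  intro x y hxy hnb
  refine reflTransGen_closed (fun x y hs => ?_) _ _ (hD x y hxy hnb)
  by_cases he : s(x, y) = s(a, b)
  · rcases Sym2.eq_iff.1 he with ⟨rfl, rfl⟩ | ⟨rfl, rfl⟩
    · exact .single (.inl (.inr ⟨rfl, rfl⟩))
    · exact ReflTransGen.mono hoff _ _ hba
  · exact .single ((mixedStep_addArc_iff he).2 hs)

/-- Boesch–Tindell: by `mixedReachableOnNonBridges_addArc`, a non-bridge edge `ab` can be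
oriented one way or the other without destroying mixed reachability. -/
theorem MixedReachableOnNonBridges.reflTransGen_mixedStepOff
    (hD : G.MixedReachableOnNonBridges D) (hab : G.Adj a b) (hnb : ¬G.IsBridge s(a, b)) :
    ReflTransGen (G.mixedStepOff D s(a, b)) a b ∨
      ReflTransGen (G.mixedStepOff D s(a, b)) b a := by
  set T := G.mixedStepOff D s(a, b)
  by_contra! ⟨hTab, hTba⟩
  obtain ⟨p, hp⟩ := exists_walk_forall_darts_not_isBridge hab hnb
  -- Propagate `T*-reaches b` backwards along a walk from `a` to `b` avoiding `ab`.
  let R : V → V → Prop := fun z w => ReflTransGen T w b → ReflTransGen T z b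
  have hsplit : ∀ x y, G.mixedStep D x y → T x y ∨ (x = a ∧ y = b) ∨ (x = b ∧ y = a) :=
    fun x y hs => if he : s(x, y) = s(a, b) then .inr (Sym2.eq_iff.1 he) else .inl ⟨hs, he⟩
  have hR : ReflTransGen R a b := p.reflTransGen_of_forall_darts fun d hd => .single fun hwb => by
    obtain ⟨he, hnbd⟩ := hp d hd
    by_cases hs : G.mixedStep D d.fst d.snd
    · exact .head ⟨hs, he⟩ hwb
    -- Otherwise `D` orients `d` backwards, and the mixed path from `d.fst` to `d.snd` that `hD`
    -- provides either avoids `ab` or crosses it.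
    have hwz : T d.snd d.fst := by
      refine ⟨.inl ?_, by rwa [Sym2.eq_swap]⟩
      by_contra h
      exact hs (.inr ⟨d.adj, fun h' => hs (.inl h'), h⟩)
    rcases (hD _ _ d.adj hnbd).cases_of_le_or_pair hsplit hTab hTba with
      h | ⟨hza, hbw⟩ | ⟨hzb, -⟩
    · exact h.trans hwb
    · exact absurd ((hbw.tail hwz).trans hza) hTba
    · exact hzb
  have : Std.Refl R := ⟨fun _ => id⟩
  have : IsTrans V R := ⟨fun _ _ _ h₁ h₂ h => h₁ (h₂ h)⟩
  exact hTab ((reflTransGen_eq_self (r := R) ▸ hR) .refl)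

theorem exists_isOrientation_of_mixedReachableOnNonBridges [Finite V]
    (hD : G.IsPartialOrientation D) (hr : G.MixedReachableOnNonBridges D)
    (hbr : ∀ x y, G.Adj x y → G.IsBridge s(x, y) → D x y ∨ D y x) :
    ∃ D', IsOrientation G D' ∧ D ≤ D' ∧
      ∀ x y, G.Adj x y → ¬G.IsBridge s(x, y) → ReflTransGen D' x y := by
  let S := {D | G.IsPartialOrientation D ∧ G.MixedReachableOnNonBridges D}
  obtain ⟨D', hle, hmax⟩ := S.toFinite.exists_le_maximal (show D ∈ S from ⟨hD, hr⟩)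
  obtain ⟨hD'o, hD'r⟩ := hmax.prop
  have hextend : ∀ a b, G.Adj a b → ¬D' a b → ¬D' b a →
      ¬ReflTransGen (G.mixedStepOff D' s(a, b)) b a := fun a b hab hDab hDba hba =>
    hDab (hmax.2 ⟨isPartialOrientation_addArc hD'o hab hDba,
      mixedReachableOnNonBridges_addArc hD'r hba⟩ (fun _ _ => .inl) _ _ (.inr ⟨rfl, rfl⟩))
  have htotal : ∀ x y, G.Adj x y → D' x y ∨ D' y x := by
    intro a b hab
    by_contra! ⟨hDab, hDba⟩
    by_cases hb : G.IsBridge s(a, b)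
    · rcases hbr a b hab hb with h | h
      exacts [hDab (hle _ _ h), hDba (hle _ _ h)]
    rcases hD'r.reflTransGen_mixedStepOff hab hb with h | h
    · exact hextend b a hab.symm hDba hDab (Sym2.eq_swap ▸ h)
    · exact hextend a b hab hDab hDba h
  have hstep : G.mixedStep D' ≤ D' := by
    rintro x y (h | ⟨hxy, hn, hn'⟩)
    exacts [h, (htotal x y hxy).elim (absurd · hn) (absurd · hn')]
  refine ⟨D', fun x y => ⟨⟨htotal x y, ?_⟩, (hD'o x y).2⟩, hle,
    fun x y hxy hb => ReflTransGen.mono hstep _ _ (hD'r x y hxy hb)⟩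
  rintro (h | h)
  exacts [(hD'o x y).1 h, ((hD'o y x).1 h).symm]

end SimpleGraph

section Cuts

variable {V : Type*} [Finite V]

theorem add_le_frDemand (r : V → V → ℕ) {X : Set V} {u v u' v' : V} (hu : u ∈ X)
    (hv : v ∉ X) (hu' : u' ∈ X) (hv' : v' ∉ X) : r u v + r v' u' ≤ frDemand r X := by
  have hbdd (g : V → V → ℕ) : BddAbove {n | ∃ u ∈ X, ∃ v ∉ X, n = g u v} :=
    ((Set.finite_range (Function.uncurry g)).subset
      (by rintro _ ⟨u, -, v, -, rfl⟩; exact ⟨(u, v), rfl⟩)).bddAbove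
  exact add_le_add (le_csSup (hbdd r) ⟨u, hu, v, hv, rfl⟩)
    (le_csSup (hbdd fun u v => r v u) ⟨u', hu', v', hv', rfl⟩)

theorem cutCard_le_ncard (H : SimpleGraph V) (s : Set (Sym2 V)) {X : Set V}
    (hX : ∀ a b, (H.deleteEdges s).Adj a b → a ∈ X → b ∈ X) :
    cutCard H X ≤ s.ncard := by
  refine Set.ncard_le_ncard ?_ s.toFinite
  rintro _ ⟨he, a, ha, b, hb, rfl⟩
  by_contra hs
  exact hb (hX a b (by simpa [hs] using he) ha)

end Cuts

namespace SimpleGraph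

variable {V : Type*} (H : SimpleGraph V) (P : Set (V × V))

def DemandsAcross (x y : V) : Prop :=
  ∃ p ∈ P,
    (H.deleteEdges {s(x, y)}).Reachable x p.1 ∧ (H.deleteEdges {s(x, y)}).Reachable y p.2

/-- Bridges that no demand pair crosses are oriented along an arbitrary well-order of `V`. -/
def bridgeOrientation (x y : V) : Prop :=
  H.Adj x y ∧ H.IsBridge s(x, y) ∧
    (H.DemandsAcross P x y ∨ ¬H.DemandsAcross P y x ∧ WellOrderingRel x y)

theorem bridgeOrientation_or {x y : V} (hxy : H.Adj x y) (hb : H.IsBridge s(x, y)) :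
    H.bridgeOrientation P x y ∨ H.bridgeOrientation P y x := by
  have hb' : H.IsBridge s(y, x) := Sym2.eq_swap ▸ hb
  by_cases h₁ : H.DemandsAcross P x y
  · exact .inl ⟨hxy, hb, .inl h₁⟩
  by_cases h₂ : H.DemandsAcross P y x
  · exact .inr ⟨hxy.symm, hb', .inl h₂⟩
  rcases trichotomous_of WellOrderingRel x y with h | rfl | h
  · exact .inl ⟨hxy, hb, .inr ⟨h₂, h⟩⟩
  · exact (H.irrefl hxy).elim
  · exact .inr ⟨hxy.symm, hb', .inr ⟨h₁, h⟩⟩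

theorem mixedReachableOnNonBridges_bridgeOrientation :
    H.MixedReachableOnNonBridges (H.bridgeOrientation P) := by
  intro x y hxy hb
  obtain ⟨p, hp⟩ := exists_walk_forall_darts_not_isBridge hxy hb
  refine p.reflTransGen_of_forall_darts fun d hd =>
    .single (.inr ⟨d.adj, fun h => (hp d hd).2 h.2.1, fun h => (hp d hd).2 ?_⟩)
  rw [Dart.edge, Sym2.eq_swap]
  exact h.2.1

end SimpleGraph

def CoversPairDemand {V : Type*} (H : SimpleGraph V) (P : Set (V × V)) : Prop :=
  ∀ X : Set V, frDemand (fun u v => if (u, v) ∈ P then 1 else 0) X ≤ cutCard H X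

namespace CoversPairDemand

open SimpleGraph

variable {V : Type*} [Finite V] {H : SimpleGraph V} {P : Set (V × V)}

theorem reachable (hcov : CoversPairDemand H P) {u v : V} (huv : (u, v) ∈ P) :
    H.Reachable u v := by
  by_contra hv
  have hcut := cutCard_le_ncard H ∅ (X := {z | H.Reachable u z})
    fun a b hab ha => ha.trans (by simpa using hab.reachable)
  have hdem := (add_le_frDemand (X := {z | H.Reachable u z}) _ Reachable.rfl hv Reachable.rfl
    hv).trans (hcov _)
  simp only [huv, if_true, Set.ncard_empty] at hdem hcut
  omega

theorem not_demandsAcross_and (hcov : CoversPairDemand H P) {x y : V}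
    (hb : H.IsBridge s(x, y)) : ¬(H.DemandsAcross P x y ∧ H.DemandsAcross P y x) := by
  rintro ⟨⟨p, hp, hxp, hyp⟩, ⟨q, hq, hyq, hxq⟩⟩
  rw [Sym2.eq_swap] at hyq hxq
  set G' := H.deleteEdges {s(x, y)}
  have hside (z : V) (hy : G'.Reachable y z) : ¬G'.Reachable x z := fun hx => hb (hx.trans hy.symm)
  have hcut := cutCard_le_ncard H {s(x, y)} (X := {z | G'.Reachable x z})
    fun a b hab ha => ha.trans hab.reachable
  have hdem := (add_le_frDemand (X := {z | G'.Reachable x z}) _ hxp (hside _ hyp) hxq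
    (hside _ hyq)).trans (hcov _)
  simp only [hp, hq, if_true, Set.ncard_singleton] at hdem hcut
  omega

theorem isPartialOrientation_bridgeOrientation (hcov : CoversPairDemand H P) :
    H.IsPartialOrientation (H.bridgeOrientation P) := by
  refine fun x y => ⟨fun h => h.1, ?_⟩
  rintro ⟨⟨-, hb, h₁ | ⟨n₁, w₁⟩⟩, ⟨-, -, h₂ | ⟨n₂, w₂⟩⟩⟩
  · exact hcov.not_demandsAcross_and hb ⟨h₁, h₂⟩
  · exact n₂ h₁
  · exact n₁ h₂
  · exact asymm w₁ w₂

end CoversPairDemand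

/-- With `r(u,v) = 1` if `(u,v) ∈ P` and `0` otherwise, if `H` covers `f_r`
then `H` has an orientation `D` containing a directed `u→v` path for every `(u,v) ∈ P`. -/
theorem covers_fr_implies_orientable
    {V : Type*} [Fintype V] (H : SimpleGraph V) (P : Set (V × V))
    (hcov : ∀ X : Set V,
      frDemand (fun u v => if (u, v) ∈ P then 1 else 0) X ≤ cutCard H X) :
    ∃ D : V → V → Prop, IsOrientation H D ∧
      ∀ p ∈ P, Relation.ReflTransGen D p.1 p.2 := by
  have hcov : CoversPairDemand H P := hcov
  obtain ⟨D, hD, hbridge, hnonbridge⟩ :=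
    SimpleGraph.exists_isOrientation_of_mixedReachableOnNonBridges
      hcov.isPartialOrientation_bridgeOrientation
      (H.mixedReachableOnNonBridges_bridgeOrientation P) (fun _ _ => H.bridgeOrientation_or P)
  refine ⟨D, hD, fun ⟨u, v⟩ huv => ?_⟩
  obtain ⟨p⟩ := hcov.reachable huv
  refine p.bypass.reflTransGen_of_forall_darts fun d hd => ?_
  by_cases hb : H.IsBridge d.edge
  · have hcross := p.bypass_isPath.isTrail.reachable_deleteEdges_of_mem_darts hd
    exact .single <| hbridge _ _ ⟨d.adj, hb, .inl ⟨(u, v), huv, hcross.1.symm, hcross.2⟩⟩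
  · exact hnonbridge _ _ d.adj hb
end

section
/- Let J be a finite undirected graph on vertex set V and let P ⊆ V × V be a set of ordered pairs such that for every (u,v) ∈ P the vertices u and v lie in the same connected component of J. Then the set family F = {S ⊆ V : d_J(S) = 1 and d_P(S) ≥ 1 and d_P(V∖S) ≥ 1} is uncrossable. -/
/-- `d_P(X)`: the number of pairs `(u,v) ∈ P` with `u ∈ X` and `v ∉ X`. -/
noncomputable def pairCut {V : Type*} (P : Set (V × V)) (X : Set V) : ℕ :=
  {p ∈ P | p.1 ∈ X ∧ p.2 ∉ X}.ncard

/-- A family `F` of subsets of `V` is uncrossable. -/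
def Uncrossable {V : Type*} (F : Set (Set V)) : Prop :=
  ∀ X ∈ F, ∀ Y ∈ F, (X ∩ Y ∈ F ∧ X ∪ Y ∈ F) ∨ (X \ Y ∈ F ∧ Y \ X ∈ F)

section Aux

set_option linter.unusedSectionVars false

variable {V : Type*} [Fintype V]

/-- Positivity of the cut in terms of a crossing edge. -/
lemma cut_pos_iff (J : SimpleGraph V) (Z : Set V) :
    1 ≤ cutCard J Z ↔ ∃ a ∈ Z, ∃ b ∉ Z, J.Adj a b := by
  unfold cutCard
  rw [show (1 ≤ ({e | e ∈ J.edgeSet ∧ ∃ a ∈ Z, ∃ b ∉ Z, e = s(a, b)}).ncard) ↔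
      0 < ({e | e ∈ J.edgeSet ∧ ∃ a ∈ Z, ∃ b ∉ Z, e = s(a, b)}).ncard from Iff.rfl,
    Set.ncard_pos (Set.toFinite _)]
  constructor
  · rintro ⟨e, he, a, ha, b, hb, rfl⟩
    exact ⟨a, ha, b, hb, (SimpleGraph.mem_edgeSet J).mp he⟩
  · rintro ⟨a, ha, b, hb, hab⟩
    exact ⟨s(a, b), (SimpleGraph.mem_edgeSet J).mpr hab, a, ha, b, hb, rfl⟩

/-- Uniqueness of the crossing edge when the cut has size one. -/
lemma cut_uniq {J : SimpleGraph V} {Z : Set V} (h : cutCard J Z = 1) :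
    ∀ {a b a' b' : V}, J.Adj a b → a ∈ Z → b ∉ Z → J.Adj a' b' → a' ∈ Z → b' ∉ Z →
      a = a' ∧ b = b' := by
  intro a b a' b' hab ha hb hab' ha' hb'
  unfold cutCard at h
  rw [Set.ncard_eq_one] at h
  obtain ⟨e0, he0⟩ := h
  have h1 : s(a, b) ∈ {e | e ∈ J.edgeSet ∧ ∃ a ∈ Z, ∃ b ∉ Z, e = s(a, b)} :=
    ⟨(SimpleGraph.mem_edgeSet J).mpr hab, a, ha, b, hb, rfl⟩
  have h2 : s(a', b') ∈ {e | e ∈ J.edgeSet ∧ ∃ a ∈ Z, ∃ b ∉ Z, e = s(a, b)} :=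
    ⟨(SimpleGraph.mem_edgeSet J).mpr hab', a', ha', b', hb', rfl⟩
  rw [he0, Set.mem_singleton_iff] at h1 h2
  have h3 : s(a, b) = s(a', b') := h1.trans h2.symm
  rw [Sym2.eq_iff] at h3
  rcases h3 with ⟨h4, h5⟩ | ⟨h4, h5⟩
  · exact ⟨h4, h5⟩
  · exact absurd (h4 ▸ ha) hb'

/-- A reachable separated pair yields a crossing edge. -/
lemma reach_cross {J : SimpleGraph V} {u v : V} (h : J.Reachable u v) {Z : Set V}
    (hu : u ∈ Z) (hv : v ∉ Z) : ∃ a ∈ Z, ∃ b ∉ Z, J.Adj a b := by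
  obtain ⟨p⟩ := h
  obtain ⟨d, _, h1, h2⟩ := p.exists_boundary_dart Z hu hv
  exact ⟨d.fst, h1, d.snd, h2, d.adj⟩

lemma pair_pos_iff (P : Set (V × V)) (Z : Set V) :
    1 ≤ pairCut P Z ↔ ∃ p ∈ P, p.1 ∈ Z ∧ p.2 ∉ Z := by
  unfold pairCut
  rw [show (1 ≤ ({p ∈ P | p.1 ∈ Z ∧ p.2 ∉ Z}).ncard) ↔
      0 < ({p ∈ P | p.1 ∈ Z ∧ p.2 ∉ Z}).ncard from Iff.rfl,
    Set.ncard_pos (Set.toFinite _)]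
  constructor
  · rintro ⟨p, hp, h1, h2⟩; exact ⟨p, hp, h1, h2⟩
  · rintro ⟨p, hp, h1, h2⟩; exact ⟨p, hp, h1, h2⟩

lemma ncard_add_le_of_subsets {α : Type*} [Finite α] {A B C D : Set α}
    (h1 : A ∪ B ⊆ C ∪ D) (h2 : A ∩ B ⊆ C ∩ D) :
    A.ncard + B.ncard ≤ C.ncard + D.ncard := by
  rw [← Set.ncard_union_add_ncard_inter A B (Set.toFinite _) (Set.toFinite _),
      ← Set.ncard_union_add_ncard_inter C D (Set.toFinite _) (Set.toFinite _)]
  exact Nat.add_le_add (Set.ncard_le_ncard h1 (Set.toFinite _))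
    (Set.ncard_le_ncard h2 (Set.toFinite _))

/-- Submodularity-style inequality for `∩`/`∪`. -/
lemma cut_inter_union_le (J : SimpleGraph V) (X Y : Set V) :
    cutCard J (X ∩ Y) + cutCard J (X ∪ Y) ≤ cutCard J X + cutCard J Y := by
  unfold cutCard
  apply ncard_add_le_of_subsets
  · rintro e (⟨he, a, ha, b, hb, rfl⟩ | ⟨he, a, ha, b, hb, rfl⟩)
    · by_cases hbX : b ∈ X
      · exact Or.inr ⟨he, a, ha.2, b, fun hbY => hb ⟨hbX, hbY⟩, rfl⟩
      · exact Or.inl ⟨he, a, ha.1, b, hbX, rfl⟩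
    · rcases ha with haX | haY
      · exact Or.inl ⟨he, a, haX, b, fun h => hb (Or.inl h), rfl⟩
      · exact Or.inr ⟨he, a, haY, b, fun h => hb (Or.inr h), rfl⟩
  · rintro e ⟨⟨he, a, ha, b, hb, rfl⟩, ⟨_, c, hc, d, hd, hcd⟩⟩
    rw [Sym2.eq_iff] at hcd
    rcases hcd with ⟨h4, h5⟩ | ⟨h4, h5⟩
    · subst h4; subst h5
      exact ⟨⟨he, a, ha.1, b, fun h => hd (Or.inl h), rfl⟩,
        ⟨he, a, ha.2, b, fun h => hd (Or.inr h), rfl⟩⟩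
    · subst h4; subst h5
      exact absurd (Or.inl ha.1) hd

/-- Posimodularity-style inequality for differences. -/
lemma cut_diff_le (J : SimpleGraph V) (X Y : Set V) :
    cutCard J (X \ Y) + cutCard J (Y \ X) ≤ cutCard J X + cutCard J Y := by
  unfold cutCard
  apply ncard_add_le_of_subsets
  · rintro e (⟨he, a, ha, b, hb, rfl⟩ | ⟨he, a, ha, b, hb, rfl⟩)
    · by_cases hbX : b ∈ X
      · have hbY : b ∈ Y := by by_contra hbY; exact hb ⟨hbX, hbY⟩
        exact Or.inr ⟨he, b, hbY, a, ha.2, Sym2.eq_swap⟩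
      · exact Or.inl ⟨he, a, ha.1, b, hbX, rfl⟩
    · by_cases hbY : b ∈ Y
      · have hbX : b ∈ X := by by_contra hbX; exact hb ⟨hbY, hbX⟩
        exact Or.inl ⟨he, b, hbX, a, ha.2, Sym2.eq_swap⟩
      · exact Or.inr ⟨he, a, ha.1, b, hbY, rfl⟩
  · rintro e ⟨⟨he, a, ha, b, hb, rfl⟩, ⟨_, c, hc, d, hd, hcd⟩⟩
    rw [Sym2.eq_iff] at hcd
    rcases hcd with ⟨h4, h5⟩ | ⟨h4, h5⟩
    · subst h4; subst h5
      exact absurd hc fun h => (h.2 ha.1)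
    · subst h4; subst h5
      exact ⟨⟨he, a, ha.1, b, hc.2, rfl⟩, ⟨he, b, hc.1, a, ha.2, Sym2.eq_swap⟩⟩

/-- Core case analysis: with unique crossing edges for `X` and `Y`, the four "quadrant"
cuts cannot simultaneously all be crossed. Here the first quadrant cut is crossed by an
edge leaving `X`. -/
lemma dich_aux (J : SimpleGraph V) (X Y : Set V)
    (uX : ∀ {a b a' b' : V}, J.Adj a b → a ∈ X → b ∉ X → J.Adj a' b' → a' ∈ X → b' ∉ X →
      a = a' ∧ b = b')
    (uY : ∀ {a b a' b' : V}, J.Adj a b → a ∈ Y → b ∉ Y → J.Adj a' b' → a' ∈ Y → b' ∉ Y →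
      a = a' ∧ b = b')
    {a1 b1 a2 b2 a3 b3 a4 b4 : V}
    (h1 : J.Adj a1 b1) (a1X : a1 ∈ X) (a1Y : a1 ∈ Y) (b1X : b1 ∉ X)
    (h2 : J.Adj a2 b2) (a2X : a2 ∈ X) (a2Y : a2 ∉ Y) (hb2 : b2 ∉ X ∨ b2 ∈ Y)
    (h3 : J.Adj a3 b3) (a3X : a3 ∉ X) (a3Y : a3 ∈ Y) (hb3 : b3 ∈ X ∨ b3 ∉ Y)
    (h4 : J.Adj a4 b4) (a4X : a4 ∉ X) (a4Y : a4 ∉ Y) (hb4 : b4 ∈ X ∨ b4 ∈ Y) : False := by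
  rcases hb2 with hb2 | hb2
  · -- e2 crosses X, so a2 = a1, contradicting a2 ∉ Y, a1 ∈ Y
    exact a2Y ((uX h2 a2X hb2 h1 a1X b1X).1 ▸ a1Y)
  · -- e2 crosses Y backwards: the Y-crossing edge is (b2, a2)
    rcases hb3 with hb3 | hb3
    · -- e3 crosses X backwards: (b3, a3) = (a1, b1)
      obtain ⟨e3a, e3b⟩ := uX h3.symm hb3 a3X h1 a1X b1X
      rcases hb4 with hb4 | hb4
      · -- e4 crosses X backwards: (b4, a4) = (a1, b1), so a4 = b1 = a3 ∈ Y
        obtain ⟨_, e4b⟩ := uX h4.symm hb4 a4X h1 a1X b1X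
        exact a4Y (e4b ▸ e3b ▸ a3Y)
      · -- e4 crosses Y backwards: (b4, a4) = (b2, a2), so a4 = a2 ∈ X
        obtain ⟨_, e4b⟩ := uY h4.symm hb4 a4Y h2.symm hb2 a2Y
        exact a4X (e4b ▸ a2X)
    · -- e3 crosses Y: (a3, b3) = (b2, a2), so b3 = a2 ∈ X, while b3 ∉ Y
      obtain ⟨_, e3b⟩ := uY h3 a3Y hb3 h2.symm hb2 a2Y
      have b3X : b3 ∈ X := e3b ▸ a2X
      obtain ⟨e4a, _⟩ := uX h3.symm b3X a3X h1 a1X b1X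
      exact hb3 (e4a ▸ a1Y)

/-- If `d_J(X) = d_J(Y) = 1`, not all four corner sets can be crossed by edges. -/
lemma dich (J : SimpleGraph V) (X Y : Set V)
    (uX : ∀ {a b a' b' : V}, J.Adj a b → a ∈ X → b ∉ X → J.Adj a' b' → a' ∈ X → b' ∉ X →
      a = a' ∧ b = b')
    (uY : ∀ {a b a' b' : V}, J.Adj a b → a ∈ Y → b ∉ Y → J.Adj a' b' → a' ∈ Y → b' ∉ Y →
      a = a' ∧ b = b')
    (h1 : ∃ a ∈ X ∩ Y, ∃ b ∉ X ∩ Y, J.Adj a b)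
    (h2 : ∃ a ∈ X \ Y, ∃ b ∉ X \ Y, J.Adj a b)
    (h3 : ∃ a ∈ Y \ X, ∃ b ∉ Y \ X, J.Adj a b)
    (h4 : ∃ a ∈ X ∪ Y, ∃ b ∉ X ∪ Y, J.Adj a b) : False := by
  obtain ⟨a1, ha1, b1, hb1, e1⟩ := h1
  obtain ⟨a2, ha2, b2, hb2, e2⟩ := h2
  obtain ⟨a3, ha3, b3, hb3, e3⟩ := h3
  obtain ⟨a4, ha4, b4, hb4, e4⟩ := h4
  have hb2' : b2 ∉ X ∨ b2 ∈ Y := by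
    by_cases h : b2 ∈ X
    · right; by_contra h'; exact hb2 ⟨h, h'⟩
    · left; exact h
  have hb3' : b3 ∉ Y ∨ b3 ∈ X := by
    by_cases h : b3 ∈ Y
    · right; by_contra h'; exact hb3 ⟨h, h'⟩
    · left; exact h
  have ha4' : a4 ∈ X ∨ a4 ∈ Y := ha4
  have hb4X : b4 ∉ X := fun h => hb4 (Or.inl h)
  have hb4Y : b4 ∉ Y := fun h => hb4 (Or.inr h)
  by_cases hb1X : b1 ∈ X
  · -- then b1 ∉ Y; use the lemma with the roles of X and Y swapped
    have hb1Y : b1 ∉ Y := fun h => hb1 ⟨hb1X, h⟩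
    exact dich_aux J Y X uY uX e1 ha1.2 ha1.1 hb1Y
      e3 ha3.1 ha3.2 hb3'
      e2 ha2.2 ha2.1 hb2'.symm
      e4.symm hb4Y hb4X ha4'.symm
  · exact dich_aux J X Y uX uY e1 ha1.1 ha1.2 hb1X
      e2 ha2.1 ha2.2 hb2'
      e3 ha3.2 ha3.1 hb3'.symm
      e4.symm hb4X hb4Y ha4'

/-- If no edge crosses `X \ Y`, then `X ∩ Y` and `X ∪ Y` belong to the family. -/
lemma inter_case (J : SimpleGraph V) (P : Set (V × V))
    (hP : ∀ p ∈ P, J.Reachable p.1 p.2) (X Y : Set V)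
    (hX : cutCard J X = 1 ∧ 1 ≤ pairCut P X ∧ 1 ≤ pairCut P Xᶜ)
    (hY : cutCard J Y = 1 ∧ 1 ≤ pairCut P Y ∧ 1 ≤ pairCut P Yᶜ)
    (hQ2 : ¬ ∃ a ∈ X \ Y, ∃ b ∉ X \ Y, J.Adj a b) :
    (cutCard J (X ∩ Y) = 1 ∧ 1 ≤ pairCut P (X ∩ Y) ∧ 1 ≤ pairCut P (X ∩ Y)ᶜ) ∧
    (cutCard J (X ∪ Y) = 1 ∧ 1 ≤ pairCut P (X ∪ Y) ∧ 1 ≤ pairCut P (X ∪ Y)ᶜ) := by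
  obtain ⟨p1, hp1, p1a, p1b⟩ := (pair_pos_iff P X).mp hX.2.1
  obtain ⟨p2, hp2, p2a', p2b'⟩ := (pair_pos_iff P Xᶜ).mp hX.2.2
  have p2a : p2.1 ∉ X := p2a'
  have p2b : p2.2 ∈ X := not_not.mp p2b'
  obtain ⟨q1, hq1, q1a, q1b⟩ := (pair_pos_iff P Y).mp hY.2.1
  obtain ⟨q2, hq2, q2a', q2b'⟩ := (pair_pos_iff P Yᶜ).mp hY.2.2
  have q2a : q2.1 ∉ Y := q2a'
  have q2b : q2.2 ∈ Y := not_not.mp q2b'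
  have p1aY : p1.1 ∈ Y := by
    by_contra h
    exact hQ2 (reach_cross (hP p1 hp1) ⟨p1a, h⟩ (fun hc => p1b hc.1))
  have p2bY : p2.2 ∈ Y := by
    by_contra h
    exact hQ2 (reach_cross (hP p2 hp2).symm ⟨p2b, h⟩ (fun hc => p2a hc.1))
  have q1bX : q1.2 ∉ X := by
    intro h
    exact hQ2 (reach_cross (hP q1 hq1).symm ⟨h, q1b⟩ (fun hc => hc.2 q1a))
  have q2aX : q2.1 ∉ X := by
    intro h
    exact hQ2 (reach_cross (hP q2 hq2) ⟨h, q2a⟩ (fun hc => hc.2 q2b))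
  have c1 : 1 ≤ cutCard J (X ∩ Y) :=
    (cut_pos_iff J (X ∩ Y)).mpr
      (reach_cross (hP p1 hp1) ⟨p1a, p1aY⟩ (fun hc => p1b hc.1))
  have c2 : 1 ≤ cutCard J (X ∪ Y) :=
    (cut_pos_iff J (X ∪ Y)).mpr
      (reach_cross (hP q1 hq1) (Or.inr q1a) (fun hc => hc.elim q1bX q1b))
  have csum := cut_inter_union_le J X Y
  rw [hX.1, hY.1] at csum
  refine ⟨⟨by omega, ?_, ?_⟩, ⟨by omega, ?_, ?_⟩⟩
  · exact (pair_pos_iff P (X ∩ Y)).mpr ⟨p1, hp1, ⟨p1a, p1aY⟩, fun hc => p1b hc.1⟩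
  · exact (pair_pos_iff P (X ∩ Y)ᶜ).mpr
      ⟨p2, hp2, fun hc => p2a hc.1, fun hc => hc ⟨p2b, p2bY⟩⟩
  · exact (pair_pos_iff P (X ∪ Y)).mpr
      ⟨q1, hq1, Or.inr q1a, fun hc => hc.elim q1bX q1b⟩
  · exact (pair_pos_iff P (X ∪ Y)ᶜ).mpr
      ⟨q2, hq2, fun hc => hc.elim q2aX q2a, fun hc => hc (Or.inr q2b)⟩

/-- If no edge crosses `X ∩ Y`, then `X \ Y` and `Y \ X` belong to the family. -/
lemma diff_case (J : SimpleGraph V) (P : Set (V × V))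
    (hP : ∀ p ∈ P, J.Reachable p.1 p.2) (X Y : Set V)
    (hX : cutCard J X = 1 ∧ 1 ≤ pairCut P X ∧ 1 ≤ pairCut P Xᶜ)
    (hY : cutCard J Y = 1 ∧ 1 ≤ pairCut P Y ∧ 1 ≤ pairCut P Yᶜ)
    (hQ1 : ¬ ∃ a ∈ X ∩ Y, ∃ b ∉ X ∩ Y, J.Adj a b) :
    (cutCard J (X \ Y) = 1 ∧ 1 ≤ pairCut P (X \ Y) ∧ 1 ≤ pairCut P (X \ Y)ᶜ) ∧
    (cutCard J (Y \ X) = 1 ∧ 1 ≤ pairCut P (Y \ X) ∧ 1 ≤ pairCut P (Y \ X)ᶜ) := by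
  obtain ⟨p1, hp1, p1a, p1b⟩ := (pair_pos_iff P X).mp hX.2.1
  obtain ⟨p2, hp2, p2a', p2b'⟩ := (pair_pos_iff P Xᶜ).mp hX.2.2
  have p2a : p2.1 ∉ X := p2a'
  have p2b : p2.2 ∈ X := not_not.mp p2b'
  obtain ⟨q1, hq1, q1a, q1b⟩ := (pair_pos_iff P Y).mp hY.2.1
  obtain ⟨q2, hq2, q2a', q2b'⟩ := (pair_pos_iff P Yᶜ).mp hY.2.2
  have q2a : q2.1 ∉ Y := q2a'
  have q2b : q2.2 ∈ Y := not_not.mp q2b'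
  have p1aY : p1.1 ∉ Y := by
    intro h
    exact hQ1 (reach_cross (hP p1 hp1) ⟨p1a, h⟩ (fun hc => p1b hc.1))
  have p2bY : p2.2 ∉ Y := by
    intro h
    exact hQ1 (reach_cross (hP p2 hp2).symm ⟨p2b, h⟩ (fun hc => p2a hc.1))
  have q1aX : q1.1 ∉ X := by
    intro h
    exact hQ1 (reach_cross (hP q1 hq1) ⟨h, q1a⟩ (fun hc => q1b hc.2))
  have q2bX : q2.2 ∉ X := by
    intro h
    exact hQ1 (reach_cross (hP q2 hq2).symm ⟨h, q2b⟩ (fun hc => q2a hc.2))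
  have c1 : 1 ≤ cutCard J (X \ Y) :=
    (cut_pos_iff J (X \ Y)).mpr
      (reach_cross (hP p1 hp1) ⟨p1a, p1aY⟩ (fun hc => p1b hc.1))
  have c2 : 1 ≤ cutCard J (Y \ X) :=
    (cut_pos_iff J (Y \ X)).mpr
      (reach_cross (hP q1 hq1) ⟨q1a, q1aX⟩ (fun hc => q1b hc.1))
  have csum := cut_diff_le J X Y
  rw [hX.1, hY.1] at csum
  refine ⟨⟨by omega, ?_, ?_⟩, ⟨by omega, ?_, ?_⟩⟩
  · exact (pair_pos_iff P (X \ Y)).mpr ⟨p1, hp1, ⟨p1a, p1aY⟩, fun hc => p1b hc.1⟩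
  · exact (pair_pos_iff P (X \ Y)ᶜ).mpr
      ⟨p2, hp2, fun hc => p2a hc.1, fun hc => hc ⟨p2b, p2bY⟩⟩
  · exact (pair_pos_iff P (Y \ X)).mpr ⟨q1, hq1, ⟨q1a, q1aX⟩, fun hc => q1b hc.1⟩
  · exact (pair_pos_iff P (Y \ X)ᶜ).mpr
      ⟨q2, hq2, fun hc => q2a hc.1, fun hc => hc ⟨q2b, q2bX⟩⟩

/-- The crossing-edge set is invariant under complementation. -/
lemma cut_compl (J : SimpleGraph V) (Z : Set V) : cutCard J Zᶜ = cutCard J Z := by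
  unfold cutCard
  congr 1
  ext e
  constructor
  · rintro ⟨he, a, ha, b, hb, rfl⟩
    exact ⟨he, b, not_not.mp hb, a, ha, Sym2.eq_swap⟩
  · rintro ⟨he, a, ha, b, hb, rfl⟩
    exact ⟨he, b, hb, a, not_not.mpr ha, Sym2.eq_swap⟩

end Aux

/-- If every pair of `P` lies in one connected component of `J`, then the
family `{S : d_J(S) = 1 ∧ d_P(S) ≥ 1 ∧ d_P(V∖S) ≥ 1}` is uncrossable. -/
theorem family_uncrossable
    {V : Type*} [Fintype V] (J : SimpleGraph V) (P : Set (V × V))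
    (hP : ∀ p ∈ P, J.Reachable p.1 p.2) :
    Uncrossable {S : Set V | cutCard J S = 1 ∧ 1 ≤ pairCut P S ∧ 1 ≤ pairCut P Sᶜ} := by
  intro X hX Y hY
  simp only [Set.mem_setOf_eq] at hX hY ⊢
  by_cases hQ2 : ∃ a ∈ X \ Y, ∃ b ∉ X \ Y, J.Adj a b
  · by_cases hQ3 : ∃ a ∈ Y \ X, ∃ b ∉ Y \ X, J.Adj a b
    · by_cases hQ1 : ∃ a ∈ X ∩ Y, ∃ b ∉ X ∩ Y, J.Adj a b
      · by_cases hQ4 : ∃ a ∈ X ∪ Y, ∃ b ∉ X ∪ Y, J.Adj a b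
        · exact absurd (dich J X Y (cut_uniq hX.1) (cut_uniq hY.1) hQ1 hQ2 hQ3 hQ4) id
        · -- no edge crosses X ∪ Y: apply `diff_case` to the complements
          right
          have hXc : cutCard J Xᶜ = 1 ∧ 1 ≤ pairCut P Xᶜ ∧ 1 ≤ pairCut P Xᶜᶜ := by
            refine ⟨by rw [cut_compl]; exact hX.1, hX.2.2, ?_⟩
            rw [compl_compl]; exact hX.2.1
          have hYc : cutCard J Yᶜ = 1 ∧ 1 ≤ pairCut P Yᶜ ∧ 1 ≤ pairCut P Yᶜᶜ := by
            refine ⟨by rw [cut_compl]; exact hY.1, hY.2.2, ?_⟩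
            rw [compl_compl]; exact hY.2.1
          have hQ1' : ¬ ∃ a ∈ Xᶜ ∩ Yᶜ, ∃ b ∉ Xᶜ ∩ Yᶜ, J.Adj a b := by
            rintro ⟨a, ha, b, hb, hab⟩
            have haU : a ∉ X ∪ Y := fun h => h.elim ha.1 ha.2
            have hbU : b ∈ X ∪ Y := by
              by_contra h
              exact hb ⟨fun h' => h (Or.inl h'), fun h' => h (Or.inr h')⟩
            exact hQ4 ⟨b, hbU, a, haU, hab.symm⟩
          have e1 : Xᶜ \ Yᶜ = Y \ X := by
            rw [Set.diff_eq, compl_compl, Set.inter_comm, ← Set.diff_eq]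
          have e2 : Yᶜ \ Xᶜ = X \ Y := by
            rw [Set.diff_eq, compl_compl, Set.inter_comm, ← Set.diff_eq]
          obtain ⟨hA, hB⟩ := diff_case J P hP Xᶜ Yᶜ hXc hYc hQ1'
          rw [e1] at hA
          rw [e2] at hB
          exact ⟨hB, hA⟩
      · right
        exact diff_case J P hP X Y hX hY hQ1
    · -- no edge crosses Y \ X: apply `inter_case` with the roles of X and Y swapped
      left
      obtain ⟨hA, hB⟩ := inter_case J P hP Y X hY hX hQ3
      rw [Set.inter_comm] at hA
      rw [Set.union_comm] at hB
      exact ⟨hA, hB⟩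
  · left
    exact inter_case J P hP X Y hX hY hQ2
end

section
/- Let T be a finite tree on vertex set V and let P ⊆ V × V be a set of ordered pairs. Then T is P-orientable if and only if there do not exist pairs (u₁,v₁), (u₂,v₂) ∈ P and an edge {a,b} of T such that the unique path in T from u₁ to v₁ traverses this edge in the direction from a to b while the unique path in T from u₂ to v₂ traverses it in the direction from b to a. -/
/-- `G` is `P`-orientable: it admits an orientation `D` that contains a directed
path from `u` to `v` for every `(u,v) ∈ P`. -/
def POrientable {V : Type*} (G : SimpleGraph V) (P : Set (V × V)) : Prop :=
  ∃ D : V → V → Prop, IsOrientation G D ∧ ∀ p ∈ P, Relation.ReflTransGen D p.1 p.2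

lemma IsOrientation.adj {V : Type*} {G : SimpleGraph V} {D : V → V → Prop} {x y : V}
    (hD : IsOrientation G D) (h : D x y) : G.Adj x y :=
  (hD x y).1.mpr (.inl h)

namespace SimpleGraph

variable {V : Type*} {G : SimpleGraph V} {D : V → V → Prop}

lemma reflTransGen_iff_exists_walk (hD : ∀ x y, D x y → G.Adj x y) {u v : V} :
    Relation.ReflTransGen D u v ↔ ∃ w : G.Walk u v, ∀ d ∈ w.darts, D d.fst d.snd := by
  constructor
  · intro h
    induction h with
    | refl => exact ⟨Walk.nil, by simp⟩
    | tail _ hxy ih =>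
      obtain ⟨w, hw⟩ := ih
      refine ⟨w.concat (hD _ _ hxy), fun d hd => ?_⟩
      rw [Walk.darts_concat, List.concat_eq_append, List.mem_append, List.mem_singleton] at hd
      rcases hd with hd | rfl
      exacts [hw d hd, hxy]
  · rintro ⟨w, hw⟩
    induction w with
    | nil => exact .refl
    | cons h w ih =>
      simp only [Walk.darts_cons, List.mem_cons, forall_eq_or_imp] at hw
      exact .head hw.1 (ih hw.2)

lemma IsAcyclic.rel_of_mem_darts_of_reflTransGen (hG : G.IsAcyclic)
    (hD : ∀ x y, D x y → G.Adj x y) {u v : V} (h : Relation.ReflTransGen D u v)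
    {w : G.Walk u v} (hw : w.IsPath) {d : G.Dart} (hd : d ∈ w.darts) : D d.fst d.snd := by
  classical
  obtain ⟨w', hw'⟩ := (reflTransGen_iff_exists_walk hD).mp h
  have hpath : (⟨w, hw⟩ : G.Path u v) = ⟨w'.bypass, w'.bypass_isPath⟩ :=
    (hG.subsingleton_path u v).elim _ _
  cases congrArg Subtype.val hpath
  exact hw' d (w'.darts_bypass_subset_darts hd)

lemma exists_isOrientation_extending (U : V → V → Prop) (hU : ∀ x y, U x y → G.Adj x y)
    (hasymm : ∀ x y, ¬ (U x y ∧ U y x)) :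
    ∃ D, IsOrientation G D ∧ ∀ x y, U x y → D x y := by
  obtain ⟨_, -⟩ := exists_wellFoundedLT V
  refine ⟨fun x y => G.Adj x y ∧ (U x y ∨ ¬ U y x ∧ x < y),
    fun u v => ⟨⟨?_, ?_⟩, ?_⟩, fun x y h => ⟨hU x y h, .inl h⟩⟩
  · intro huv
    by_cases h₁ : U u v
    · exact .inl ⟨huv, .inl h₁⟩
    by_cases h₂ : U v u
    · exact .inr ⟨huv.symm, .inl h₂⟩
    rcases lt_or_gt_of_ne huv.ne with hlt | hlt
    exacts [.inl ⟨huv, .inr ⟨h₂, hlt⟩⟩, .inr ⟨huv.symm, .inr ⟨h₁, hlt⟩⟩]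
  · rintro (⟨h, -⟩ | ⟨h, -⟩)
    exacts [h, h.symm]
  · rintro ⟨⟨-, h₁ | ⟨h₁, hlt₁⟩⟩, ⟨-, h₂ | ⟨h₂, hlt₂⟩⟩⟩
    exacts [hasymm u v ⟨h₁, h₂⟩, h₂ h₁, h₁ h₂, lt_asymm hlt₁ hlt₂]

end SimpleGraph

open SimpleGraph in
theorem tree_orientable_iff_no_conflict_general
    {V : Type*} (T : SimpleGraph V) (hT : T.IsTree) (P : Set (V × V)) :
    POrientable T P ↔
      ¬ ∃ (p₁ p₂ : V × V), p₁ ∈ P ∧ p₂ ∈ P ∧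
        ∃ (a b : V) (hab : T.Adj a b) (w₁ : T.Walk p₁.1 p₁.2) (w₂ : T.Walk p₂.1 p₂.2),
          w₁.IsPath ∧ w₂.IsPath ∧
          (⟨(a, b), hab⟩ : T.Dart) ∈ w₁.darts ∧ (⟨(b, a), hab.symm⟩ : T.Dart) ∈ w₂.darts := by
  constructor
  · rintro ⟨D, hD, hP⟩ ⟨p₁, p₂, hp₁, hp₂, a, b, hab, w₁, w₂, hw₁, hw₂, hd₁, hd₂⟩
    have hDadj x y : D x y → T.Adj x y := hD.adj
    exact (hD a b).2
      ⟨hT.isAcyclic.rel_of_mem_darts_of_reflTransGen hDadj (hP p₁ hp₁) hw₁ hd₁,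
        hT.isAcyclic.rel_of_mem_darts_of_reflTransGen hDadj (hP p₂ hp₂) hw₂ hd₂⟩
  · intro hcon
    classical
    let used (x y : V) : Prop := ∃ p ∈ P, ∃ (w : T.Walk p.1 p.2) (hxy : T.Adj x y),
      w.IsPath ∧ (⟨(x, y), hxy⟩ : T.Dart) ∈ w.darts
    obtain ⟨D, hD, hused⟩ :=
      exists_isOrientation_extending used (fun _ _ ⟨_, _, _, hxy, _⟩ => hxy)
        fun x y ⟨⟨p₁, hp₁, w₁, hxy, hw₁, hd₁⟩, ⟨p₂, hp₂, w₂, _, hw₂, hd₂⟩⟩ =>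
          hcon ⟨p₁, p₂, hp₁, hp₂, x, y, hxy, w₁, w₂, hw₁, hw₂, hd₁, hd₂⟩
    refine ⟨D, hD, fun p hp => ?_⟩
    rw [reflTransGen_iff_exists_walk fun _ _ => hD.adj]
    obtain ⟨w, hw⟩ := (hT.connected p.1 p.2).some.toPath
    exact ⟨w, fun d hd => hused _ _ ⟨p, hp, w, d.adj, hw, hd⟩⟩

/-- a tree `T` is `P`-orientable iff no two pairs of `P` force the same
edge of `T` to be traversed in both directions (by the unique paths joining the pairs). -/
theorem tree_orientable_iff_no_conflict
    {V : Type*} [Fintype V] (T : SimpleGraph V) (hT : T.IsTree) (P : Set (V × V)) :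
    POrientable T P ↔
      ¬ ∃ (p₁ p₂ : V × V), p₁ ∈ P ∧ p₂ ∈ P ∧
        ∃ (a b : V) (hab : T.Adj a b) (w₁ : T.Walk p₁.1 p₁.2) (w₂ : T.Walk p₂.1 p₂.2),
          w₁.IsPath ∧ w₂.IsPath ∧
          (⟨(a, b), hab⟩ : T.Dart) ∈ w₁.darts ∧ (⟨(b, a), hab.symm⟩ : T.Dart) ∈ w₂.darts :=
  tree_orientable_iff_no_conflict_general T hT P
end

section
/- Let T be a finite tree with n ≥ 2 vertices and let P be a nonempty finite multiset of ordered pairs of vertices of T, with p = |P| counted with multiplicity. Suppose that every leaf of T occurs as an endpoint of at least two pairs of P (counted with multiplicity) and every vertex of T of degree 2 occurs as an endpoint of at least one pair of P. Then n ≤ 3p − 1. -/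
lemma sum_countP_le {V : Type*} [Fintype V] [DecidableEq V]
    (P : Multiset (V × V)) :
    ∑ v : V, Multiset.card (P.filter fun q => q.1 = v ∨ q.2 = v)
      ≤ 2 * Multiset.card P := by
  induction P using Multiset.induction with
  | empty => simp
  | cons a s ih =>
    have hstep : ∀ v : V,
        Multiset.card ((a ::ₘ s).filter fun q => q.1 = v ∨ q.2 = v)
        = Multiset.card (s.filter fun q => q.1 = v ∨ q.2 = v)
          + (if a.1 = v ∨ a.2 = v then 1 else 0) := by
      intro v
      by_cases h : a.1 = v ∨ a.2 = v <;> simp [Multiset.filter_cons, h]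
    rw [Finset.sum_congr rfl (fun v _ => hstep v), Finset.sum_add_distrib]
    have h2 : ∑ v : V, (if a.1 = v ∨ a.2 = v then 1 else 0) ≤ 2 := by
      have hpt : ∀ v : V, (if a.1 = v ∨ a.2 = v then 1 else 0)
          ≤ (if a.1 = v then 1 else 0) + (if a.2 = v then 1 else 0) := by
        intro v
        by_cases h1 : a.1 = v <;> by_cases hb : a.2 = v <;> simp [h1, hb]
      calc ∑ v : V, (if a.1 = v ∨ a.2 = v then 1 else 0)
          ≤ ∑ v : V, ((if a.1 = v then 1 else 0) + (if a.2 = v then 1 else 0)) :=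
            Finset.sum_le_sum fun v _ => hpt v
        _ ≤ 2 := by simp [Finset.sum_add_distrib, Finset.sum_ite_eq]
    simp only [Multiset.card_cons]
    omega

/-- if every leaf of the tree `T` is an endpoint of at least two pairs of the
nonempty multiset `P` and every degree-2 vertex is an endpoint of at least one pair,
then `n ≤ 3p − 1`. -/
theorem tree_kernel_size_bound
    {V : Type*} [Fintype V] [DecidableEq V] (T : SimpleGraph V) [DecidableRel T.Adj]
    (hT : T.IsTree) (hn : 2 ≤ Fintype.card V)
    (P : Multiset (V × V)) (hP : P ≠ 0)
    (hleaf : ∀ v : V, T.degree v = 1 →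
      2 ≤ Multiset.card (P.filter fun q => q.1 = v ∨ q.2 = v))
    (hdeg2 : ∀ v : V, T.degree v = 2 →
      1 ≤ Multiset.card (P.filter fun q => q.1 = v ∨ q.2 = v)) :
    Fintype.card V ≤ 3 * Multiset.card P - 1 := by
  -- every vertex has positive degree
  have hdpos : ∀ v : V, 1 ≤ T.degree v := by
    intro v
    obtain ⟨u, hu⟩ := Fintype.exists_ne_of_one_lt_card hn v
    obtain ⟨w⟩ := hT.isConnected.preconnected v u
    cases w with
    | nil => exact absurd rfl hu.symm
    | cons h p =>
      rw [Nat.succ_le_iff, SimpleGraph.degree_pos_iff_exists_adj]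
      exact ⟨_, h⟩
  -- sum of degrees
  have hE := hT.card_edgeFinset
  have hdegsum : ∑ v : V, T.degree v = 2 * (Fintype.card V - 1) := by
    rw [SimpleGraph.sum_degrees_eq_twice_card_edges]
    omega
  -- pointwise bound
  have h3 : ∀ v ∈ (Finset.univ : Finset V), 3 ≤ Multiset.card (P.filter fun q => q.1 = v ∨ q.2 = v) + T.degree v := by
    intro v _
    have h1 := hdpos v
    by_cases e1 : T.degree v = 1
    · have := hleaf v e1; omega
    · by_cases e2 : T.degree v = 2
      · have := hdeg2 v e2; omega
      · omega
  have hsum3 : Fintype.card V * 3 ≤ ∑ v : V, (Multiset.card (P.filter fun q => q.1 = v ∨ q.2 = v) + T.degree v) :=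
    Finset.card_nsmul_le_sum _ _ _ h3
  rw [Finset.sum_add_distrib, hdegsum] at hsum3
  have hfsum : ∑ v : V, Multiset.card (P.filter fun q => q.1 = v ∨ q.2 = v) ≤ 2 * Multiset.card P := sum_countP_le P
  have hp : 1 ≤ Multiset.card P := Multiset.card_pos.mpr hP
  omega
end

section
/- Let H be a finite undirected graph on vertex set V, let s, t ∈ V be distinct vertices, and let ℓ ≥ 1 be an integer. Then λ_{H∖C}(s,t) ≥ 2(ℓ − |C|) holds for every C ⊆ V ∖ {s,t} with |C| < ℓ if and only if H contains 2ℓ pairwise edge-disjoint s–t paths such that every vertex v ∈ V ∖ {s,t} belongs to at most 2 of these paths. -/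
/-- `λ_H(u,v) ≥ n`: the undirected graph `H` contains `n` pairwise edge-disjoint
walks from `u` to `v`. -/
def HasFlow {V : Type*} (H : SimpleGraph V) (u v : V) (n : ℕ) : Prop :=
  ∃ f : Fin n → H.Walk u v, ∀ i j, i ≠ j → ∀ e, e ∈ (f i).edges → e ∉ (f j).edges

/-!
Split every vertex `v` into an entry `v⁻` and an exit `v⁺`, joined by an arc of capacity `2`
(`0` for `s` and `t`), and let every edge `uv` of `H` give unit arcs `u⁺ → v⁻` and `v⁺ → u⁻`.
A cut separating `s⁺` from `t⁻` cuts the inner arcs of some set `C` of vertices, and if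
`|C| < ℓ` each of the `2(ℓ - |C|)` edge-disjoint `s`–`t` walks of `H ∖ C` leaves it through its
own edge arc, so every cut has capacity at least `2ℓ`. By max-flow min-cut (augmenting paths)
there is an integral flow of value `2ℓ`; one of least total weight never uses both `u⁺ → v⁻`
and `v⁺ → u⁻`. It splits into `2ℓ` unit flows, each of which contains an `s`–`t` path of `H`:
these paths are edge-disjoint, and a vertex lies on at most as many of them as its inner
capacity `2`.
Conversely, at most `2|C|` of the given paths meet `C`, and the others are walks in `H ∖ C`.
-/

open Finset

namespace List

variable {α β : Type*}

@[simp] theorem consecutivePairs_cons_cons (a b : α) (l : List α) :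
    (a :: b :: l).consecutivePairs = (a, b) :: (b :: l).consecutivePairs := rfl

theorem map_fst_consecutivePairs (l : List α) :
    l.consecutivePairs.map Prod.fst = l.dropLast := by
  induction l using List.twoStepInduction <;> simp_all

theorem map_snd_consecutivePairs (l : List α) : l.consecutivePairs.map Prod.snd = l.tail := by
  induction l using List.twoStepInduction <;> simp_all

theorem IsChain.rel_of_mem_consecutivePairs {r : α → α → Prop} {l : List α} (h : l.IsChain r)
    {x y : α} (hxy : (x, y) ∈ l.consecutivePairs) : r x y := by
  induction l using List.twoStepInduction with
  | nil | singleton => simp [consecutivePairs] at hxy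
  | cons_cons a b l _ ih =>
    rw [isChain_cons_cons] at h
    rw [consecutivePairs_cons_cons, mem_cons, Prod.mk.injEq] at hxy
    rcases hxy with ⟨rfl, rfl⟩ | hxy
    exacts [h.1, ih _ h.2 hxy]

theorem sum_count_mk_right [DecidableEq α] [DecidableEq β] [Fintype β] (L : List (α × β))
    (x : α) : ∑ y, L.count (x, y) = (L.map Prod.fst).count x := by
  induction L with
  | nil => simp
  | cons p L ih =>
    obtain ⟨a, b⟩ := p
    by_cases hax : a = x <;> simp [count_cons, sum_add_distrib, ih, hax]

theorem sum_count_mk_left [DecidableEq α] [DecidableEq β] [Fintype α] (L : List (α × β))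
    (y : β) : ∑ x, L.count (x, y) = (L.map Prod.snd).count y := by
  induction L with
  | nil => simp
  | cons p L ih =>
    obtain ⟨a, b⟩ := p
    by_cases hby : b = y <;> simp [count_cons, sum_add_distrib, ih, hby]

theorem exists_nodup_isChain_cons_of_reflTransGen {r : α → α → Prop} {a b : α}
    (h : Relation.ReflTransGen r a b) :
    ∃ l, (a :: l).IsChain r ∧ (a :: l).getLast (cons_ne_nil a l) = b ∧ (a :: l).Nodup := by
  induction h using Relation.ReflTransGen.head_induction_on with
  | refl => exact ⟨[], .singleton _, rfl, nodup_singleton _⟩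
  | @head a c hac _ ih =>
    obtain ⟨l, hchain, hlast, hnd⟩ := ih
    by_cases ha : a ∈ c :: l
    · obtain ⟨l₁, l₂, hl⟩ := append_of_mem ha
      simp only [hl] at hchain hlast hnd
      refine ⟨l₂, hchain.right_of_append, ?_, hnd.of_append_right⟩
      rwa [getLast_append_of_ne_nil] at hlast
    · exact ⟨c :: l, hchain.cons_cons hac, by rwa [getLast_cons_cons], hnd.cons ha⟩

variable [DecidableEq α]

def arcCount (l : List α) (x y : α) : ℕ := l.consecutivePairs.count (x, y)

theorem arcCount_pos_iff {l : List α} {x y : α} :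
    0 < l.arcCount x y ↔ (x, y) ∈ l.consecutivePairs :=
  count_pos_iff

theorem arcCount_le_one {l : List α} (h : l.dropLast.Nodup) (x y : α) : l.arcCount x y ≤ 1 :=
  calc l.arcCount x y ≤ (l.consecutivePairs.map Prod.fst).count x :=
        count_le_count_map (f := Prod.fst)
    _ ≤ 1 := by rw [map_fst_consecutivePairs]; exact nodup_iff_count_le_one.mp h x

theorem arcCount_le_of_isChain {g : α → α → ℕ} {l : List α} (hnd : l.dropLast.Nodup)
    (hchain : l.IsChain fun x y => 0 < g x y) (x y : α) : l.arcCount x y ≤ g x y := by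
  rcases Nat.eq_zero_or_pos (l.arcCount x y) with h | h
  · omega
  · exact (arcCount_le_one hnd x y).trans
      (hchain.rel_of_mem_consecutivePairs (arcCount_pos_iff.mp h))

theorem sum_arcCount_right [Fintype α] (l : List α) (x : α) :
    ∑ y, l.arcCount x y = l.dropLast.count x := by
  simp only [arcCount, sum_count_mk_right, map_fst_consecutivePairs]

theorem sum_arcCount_left [Fintype α] (l : List α) (y : α) :
    ∑ x, l.arcCount x y = l.tail.count y := by
  simp only [arcCount, sum_count_mk_left, map_snd_consecutivePairs]

theorem sum_arcCount_add_ite [Fintype α] (a : α) (l : List α) (x : α) :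
    ∑ y, (a :: l).arcCount x y + (if (a :: l).getLast (cons_ne_nil a l) = x then 1 else 0) =
      ∑ y, (a :: l).arcCount y x + (if a = x then 1 else 0) := by
  rw [sum_arcCount_right, sum_arcCount_left, tail_cons]
  conv_lhs => rw [← count_singleton', ← count_append, dropLast_append_getLast]
  simp [count_cons]

end List

section Flow

variable {α : Type*}

theorem sum_sum_eq_zero_of_antisymm {f : α → α → ℤ} (hf : ∀ x y, f x y = -f y x)
    (S : Finset α) : ∑ x ∈ S, ∑ y ∈ S, f x y = 0 := by
  have h : ∑ x ∈ S, ∑ y ∈ S, f x y = ∑ x ∈ S, ∑ y ∈ S, -f x y := by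
    rw [sum_comm]
    exact sum_congr rfl fun _ _ => sum_congr rfl fun _ _ => hf _ _
  simp only [sum_neg_distrib] at h
  omega

variable [Fintype α]

theorem sum_eq_sum_sum_compl_of_antisymm [DecidableEq α] {f : α → α → ℤ}
    (hf : ∀ x y, f x y = -f y x) {S : Finset α} {a : α} (ha : a ∈ S)
    (hcons : ∀ x ∈ S, x ≠ a → ∑ y, f x y = 0) :
    ∑ y, f a y = ∑ x ∈ S, ∑ y ∈ Sᶜ, f x y :=
  calc ∑ y, f a y = ∑ x ∈ S, ∑ y, f x y := (sum_eq_single_of_mem a ha hcons).symm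
    _ = ∑ x ∈ S, ∑ y ∈ S, f x y + ∑ x ∈ S, ∑ y ∈ Sᶜ, f x y := by
      simp only [← sum_add_distrib, sum_add_sum_compl]
    _ = ∑ x ∈ S, ∑ y ∈ Sᶜ, f x y := by rw [sum_sum_eq_zero_of_antisymm hf, zero_add]

variable (c : α → α → ℕ) (a b : α)

structure IsSkewFlow (f : α → α → ℤ) : Prop where
  antisymm : ∀ x y, f x y = -f y x
  le_cap : ∀ x y, f x y ≤ c x y
  sum_eq_zero : ∀ x, x ≠ a → x ≠ b → ∑ y, f x y = 0

structure IsFlow (g : α → α → ℕ) : Prop where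
  le_cap : ∀ x y, g x y ≤ c x y
  sum_eq_sum : ∀ x, x ≠ a → x ≠ b → ∑ y, g y x = ∑ y, g x y

variable {c a b}

theorem IsSkewFlow.sum_eq_cut [DecidableEq α] {f : α → α → ℤ} (hf : IsSkewFlow c a b f)
    {S : Finset α} (ha : a ∈ S) (hb : b ∉ S) : ∑ y, f a y = ∑ x ∈ S, ∑ y ∈ Sᶜ, f x y :=
  sum_eq_sum_sum_compl_of_antisymm hf.antisymm ha fun x hx hxa =>
    hf.sum_eq_zero x hxa (ne_of_mem_of_not_mem hx hb)

theorem IsSkewFlow.exists_sum_eq_add_one (hab : a ≠ b) {f : α → α → ℤ}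
    (hf : IsSkewFlow c a b f) {l : List α} (hchain : (a :: l).IsChain fun x y => f x y < c x y)
    (hlast : (a :: l).getLast (List.cons_ne_nil a l) = b) (hnd : (a :: l).Nodup) :
    ∃ f', IsSkewFlow c a b f' ∧ ∑ y, f' a y = ∑ y, f a y + 1 := by
  classical
  set φ := (a :: l).arcCount with hφ_def
  have hφ : ∀ x y, φ x y ≤ 1 := List.arcCount_le_one (hnd.sublist (List.dropLast_sublist _))
  have hres : ∀ x y, 0 < φ x y → f x y < c x y := fun x y h =>
    hchain.rel_of_mem_consecutivePairs (List.arcCount_pos_iff.mp h)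
  have hsum : ∀ x, ∑ y, (f x y + φ x y - φ y x) =
      ∑ y, f x y + ((∑ y, φ x y : ℕ) - (∑ y, φ y x : ℕ) : ℤ) := fun x => by
    push_cast
    rw [sum_sub_distrib, sum_add_distrib]
    ring
  refine ⟨fun x y => f x y + φ x y - φ y x,
    ⟨fun x y => ?_, fun x y => ?_, fun x hxa hxb => ?_⟩, ?_⟩
  · linarith [hf.antisymm x y]
  · have := hf.le_cap x y
    have := hφ x y
    rcases Nat.eq_zero_or_pos (φ x y) with h | h
    · omega
    · have := hres x y h
      omega
  · have := List.sum_arcCount_add_ite a l x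
    simp only [← hφ_def, hlast, if_neg (Ne.symm hxb), if_neg (Ne.symm hxa), add_zero] at this
    rw [hsum, this, hf.sum_eq_zero x hxa hxb]
    simp
  · have := List.sum_arcCount_add_ite a l a
    simp only [← hφ_def, hlast, if_neg hab.symm, add_zero] at this
    rw [hsum, this]
    push_cast
    ring

theorem exists_isSkewFlow_of_le_cut [DecidableEq α] (hab : a ≠ b) {n : ℕ}
    (hcut : ∀ S : Finset α, a ∈ S → b ∉ S → n ≤ ∑ x ∈ S, ∑ y ∈ Sᶜ, c x y) :
    ∃ f, IsSkewFlow c a b f ∧ ∑ y, f a y = n := by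
  classical
  suffices ∀ m ≤ n, ∃ f, IsSkewFlow c a b f ∧ ∑ y, f a y = m from this n le_rfl
  intro m
  induction m with
  | zero =>
    exact fun _ => ⟨0, ⟨fun _ _ => by simp, fun _ _ => by simp, fun _ _ _ => by simp⟩, by simp⟩
  | succ m ih =>
    intro hm
    obtain ⟨f, hf, hval⟩ := ih (by omega)
    let S : Finset α := {x | Relation.ReflTransGen (fun x y => f x y < c x y) a x}
    have haS : a ∈ S := by simp [S, Relation.ReflTransGen.refl]
    by_cases hbS : b ∈ S
    · obtain ⟨l, hchain, hlast, hnd⟩ :=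
        List.exists_nodup_isChain_cons_of_reflTransGen (by simpa [S] using hbS)
      obtain ⟨f', hf', hval'⟩ := hf.exists_sum_eq_add_one hab hchain hlast hnd
      exact ⟨f', hf', by rw [hval', hval]; push_cast; ring⟩
    -- with no augmenting path, the residual component `S` of `a` is a cut saturated by `f`
    have hsat : ∀ x ∈ S, ∀ y ∈ Sᶜ, f x y = c x y := fun x hx y hy => by
      simp only [S, mem_compl, mem_filter_univ] at hx hy
      exact le_antisymm (hf.le_cap x y) (not_lt.mp fun h => hy (hx.tail h))
    have hcutS : (n : ℤ) ≤ ∑ x ∈ S, ∑ y ∈ Sᶜ, (c x y : ℤ) := by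
      exact_mod_cast hcut S haS hbS
    have hvalS : ∑ y, f a y = ∑ x ∈ S, ∑ y ∈ Sᶜ, (c x y : ℤ) := by
      rw [hf.sum_eq_cut haS hbS]
      exact sum_congr rfl fun x hx => sum_congr rfl fun y hy => hsat x hx y hy
    omega

theorem IsSkewFlow.isFlow_toNat (hca : ∀ x, c x a = 0) {f : α → α → ℤ}
    (hf : IsSkewFlow c a b f) :
    IsFlow c a b (fun x y => (f x y).toNat) ∧ (∑ y, (f a y).toNat : ℕ) = ∑ y, f a y := by
  have hpart : ∀ x y, ((f x y).toNat : ℤ) - (f y x).toNat = f x y := fun x y => by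
    have := hf.antisymm x y
    omega
  refine ⟨⟨fun x y => Int.toNat_le.mpr (hf.le_cap x y), fun x hxa hxb => ?_⟩, ?_⟩
  · have h : ∑ y, (((f x y).toNat : ℤ) - (f y x).toNat) = 0 := by
      simp only [hpart, hf.sum_eq_zero x hxa hxb]
    rw [sum_sub_distrib] at h
    exact_mod_cast (sub_eq_zero.mp h).symm
  · have hnn : ∀ y, 0 ≤ f a y := fun y => by
      have := hf.le_cap y a
      have := hf.antisymm a y
      simp only [hca, Nat.cast_zero] at *
      omega
    push_cast
    exact sum_congr rfl fun y _ => Int.toNat_of_nonneg (hnn y)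

theorem exists_isFlow_of_le_cut [DecidableEq α] (hab : a ≠ b) (hca : ∀ x, c x a = 0) {n : ℕ}
    (hcut : ∀ S : Finset α, a ∈ S → b ∉ S → n ≤ ∑ x ∈ S, ∑ y ∈ Sᶜ, c x y) :
    ∃ g, IsFlow c a b g ∧ ∑ y, g a y = n := by
  obtain ⟨f, hf, hval⟩ := exists_isSkewFlow_of_le_cut hab hcut
  obtain ⟨hg, hgval⟩ := hf.isFlow_toNat hca
  exact ⟨_, hg, by exact_mod_cast hgval.trans hval⟩

theorem IsFlow.reflTransGen_of_pos {g : α → α → ℕ} (hg : IsFlow c a b g)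
    (hca : ∀ x, c x a = 0) (hpos : 0 < ∑ y, g a y) :
    Relation.ReflTransGen (fun x y => 0 < g x y) a b := by
  classical
  by_contra hb
  let S : Finset α := {x | Relation.ReflTransGen (fun x y => 0 < g x y) a x}
  have haS : a ∈ S := by simp [S, Relation.ReflTransGen.refl]
  have hbS : b ∉ S := by simpa [S] using hb
  have hleave : ∀ x ∈ S, ∀ y ∈ Sᶜ, g x y = 0 := fun x hx y hy => by
    simp only [S, mem_compl, mem_filter_univ] at hx hy
    exact Nat.eq_zero_of_not_pos fun h => hy (hx.tail h)
  have hcut := sum_eq_sum_sum_compl_of_antisymm (f := fun x y => (g x y : ℤ) - g y x)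
    (fun x y => by ring) haS fun x hx hxa => by
      rw [sum_sub_distrib, sub_eq_zero]
      exact_mod_cast (hg.sum_eq_sum x hxa (ne_of_mem_of_not_mem hx hbS)).symm
  have hin : ∑ y, (g y a : ℤ) = 0 := by
    simp [fun y => Nat.le_zero.mp ((hg.le_cap y a).trans (hca y).le)]
  have hout : ∑ x ∈ S, ∑ y ∈ Sᶜ, ((g x y : ℤ) - g y x) ≤ 0 :=
    sum_nonpos fun x hx => sum_nonpos fun y hy => by simp [hleave x hx y hy]
  rw [sum_sub_distrib, hin, sub_zero] at hcut
  have : (0 : ℤ) < ∑ y, (g a y : ℤ) := by exact_mod_cast hpos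
  omega

theorem IsFlow.sub {g φ : α → α → ℕ} (hg : IsFlow c a b g) (hle : ∀ x y, φ x y ≤ g x y)
    (hφ : ∀ x, x ≠ a → x ≠ b → ∑ y, φ y x = ∑ y, φ x y) :
    IsFlow c a b (fun x y => g x y - φ x y) := by
  refine ⟨fun x y => (Nat.sub_le _ _).trans (hg.le_cap x y), fun x hxa hxb => ?_⟩
  rw [sum_tsub_distrib _ fun y _ => hle y x, sum_tsub_distrib _ fun y _ => hle x y,
    hg.sum_eq_sum x hxa hxb, hφ x hxa hxb]

theorem IsFlow.exists_le_sum_eq_one (hab : a ≠ b) (hca : ∀ x, c x a = 0)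
    {g : α → α → ℕ} (hg : IsFlow c a b g) (hpos : 0 < ∑ y, g a y) :
    ∃ φ, IsFlow c a b φ ∧ (∀ x y, φ x y ≤ g x y) ∧ ∑ y, φ a y = 1 := by
  classical
  obtain ⟨l, hchain, hlast, hnd⟩ :=
    List.exists_nodup_isChain_cons_of_reflTransGen (hg.reflTransGen_of_pos hca hpos)
  have hle := List.arcCount_le_of_isChain (hnd.sublist (List.dropLast_sublist _)) hchain
  refine ⟨(a :: l).arcCount,
    ⟨fun x y => (hle x y).trans (hg.le_cap x y), fun x hxa hxb => ?_⟩, hle, ?_⟩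
  · have := List.sum_arcCount_add_ite a l x
    simp only [hlast, if_neg (Ne.symm hxb), if_neg (Ne.symm hxa), add_zero] at this
    exact this.symm
  · have := List.sum_arcCount_add_ite a l a
    have hin : ∑ y, (a :: l).arcCount y a = 0 := sum_eq_zero fun y _ =>
      Nat.le_zero.mp ((hle y a).trans ((hg.le_cap y a).trans (hca y).le))
    simpa [hlast, hab.symm, hin] using this

theorem IsFlow.exists_decomposition (hab : a ≠ b) (hca : ∀ x, c x a = 0)
    {n : ℕ} {g : α → α → ℕ} (hg : IsFlow c a b g) (hval : ∑ y, g a y = n) :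
    ∃ φ : Fin n → α → α → ℕ, (∀ i, IsFlow c a b (φ i) ∧ ∑ y, φ i a y = 1) ∧
      ∀ x y, ∑ i, φ i x y ≤ g x y := by
  induction n generalizing g with
  | zero => exact ⟨Fin.elim0, fun i => i.elim0, fun _ _ => by simp⟩
  | succ n ih =>
    obtain ⟨φ₀, hφ₀, hle, hval₀⟩ := hg.exists_le_sum_eq_one hab hca (by omega)
    obtain ⟨φ, hφ, hsum⟩ := ih (hg.sub hle fun x hxa hxb => hφ₀.sum_eq_sum x hxa hxb)
      (by rw [sum_tsub_distrib _ fun y _ => hle a y, hval, hval₀]; rfl)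
    refine ⟨Fin.cons φ₀ φ, Fin.cases ⟨hφ₀, hval₀⟩ hφ, fun x y => ?_⟩
    rw [Fin.sum_univ_succ]
    simpa using Nat.add_le_of_le_sub' (hle x y) (hsum x y)

end Flow

section SplitNetwork

variable {V : Type*} [DecidableEq V] (H : SimpleGraph V) [DecidableRel H.Adj] (s t : V)

/-- Capacities of the vertex-split network: `Sum.inl v` is the entry `v⁻` and `Sum.inr v` the
exit `v⁺` of `v`. -/
def splitCap : V ⊕ V → V ⊕ V → ℕ
  | .inr u, .inl v => if H.Adj u v then 1 else 0
  | .inl v, .inr w => if v = w ∧ v ≠ s ∧ v ≠ t then 2 else 0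
  | _, _ => 0

theorem splitCap_inr_inl_le_one (u v : V) : splitCap H s t (.inr u) (.inl v) ≤ 1 := by
  simp only [splitCap]
  split_ifs <;> simp

theorem splitCap_inl_inr_le_two (v w : V) : splitCap H s t (.inl v) (.inr w) ≤ 2 := by
  simp only [splitCap]
  split_ifs <;> simp

theorem splitCap_inr_source (x : V ⊕ V) : splitCap H s t x (.inr s) = 0 := by
  rcases x with v | v <;> simp +contextual [splitCap]

variable {H s t} [Fintype V] {g : V ⊕ V → V ⊕ V → ℕ}

theorem IsFlow.adj_of_pos (hg : IsFlow (splitCap H s t) (.inr s) (.inl t) g) {u v : V}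
    (h : 0 < g (.inr u) (.inl v)) : H.Adj u v := by
  have := h.trans_le (hg.le_cap _ _)
  simp only [splitCap] at this
  split_ifs at this with hadj
  exacts [hadj, absurd this (lt_irrefl 0)]

theorem IsFlow.ne_of_pos_inner (hg : IsFlow (splitCap H s t) (.inr s) (.inl t) g) {v : V}
    (h : 0 < g (.inl v) (.inr v)) : v ≠ s ∧ v ≠ t := by
  have := h.trans_le (hg.le_cap _ _)
  simp only [splitCap] at this
  split_ifs at this with hv
  exacts [hv.2, absurd this (lt_irrefl 0)]

theorem IsFlow.pos_inner_of_pos_in (hg : IsFlow (splitCap H s t) (.inr s) (.inl t) g)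
    {u v : V} (hvt : v ≠ t) (h : 0 < g (.inr u) (.inl v)) : 0 < g (.inl v) (.inr v) := by
  have hcons := hg.sum_eq_sum (.inl v) (by simp) (by simpa using hvt)
  have hout : ∑ y, g (.inl v) y = g (.inl v) (.inr v) := by
    refine sum_eq_single _ (fun y _ hy => Nat.le_zero.mp ((hg.le_cap _ _).trans ?_)) (by simp)
    rcases y with w | w
    · simp [splitCap]
    · simp [splitCap, show v ≠ w by rintro rfl; exact hy rfl]
  have hin : g (.inr u) (.inl v) ≤ ∑ y, g y (.inl v) :=
    single_le_sum (f := fun y => g y (.inl v)) (fun _ _ => Nat.zero_le _) (mem_univ _)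
  omega

theorem IsFlow.pos_inner_of_pos_out (hg : IsFlow (splitCap H s t) (.inr s) (.inl t) g)
    {v w : V} (hvs : v ≠ s) (h : 0 < g (.inr v) (.inl w)) : 0 < g (.inl v) (.inr v) := by
  have hcons := hg.sum_eq_sum (.inr v) (by simpa using hvs) (by simp)
  have hin : ∑ y, g y (.inr v) = g (.inl v) (.inr v) := by
    refine sum_eq_single _ (fun y _ hy => Nat.le_zero.mp ((hg.le_cap _ _).trans ?_)) (by simp)
    rcases y with w | w
    · simp [splitCap, show w ≠ v by rintro rfl; exact hy rfl]
    · simp [splitCap]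
  have hout : g (.inr v) (.inl w) ≤ ∑ y, g (.inr v) y :=
    single_le_sum (f := fun y => g (.inr v) y) (fun _ _ => Nat.zero_le _) (mem_univ _)
  omega

theorem IsFlow.pos_inner_of_pos_of_pos (hst : s ≠ t)
    (hg : IsFlow (splitCap H s t) (.inr s) (.inl t) g) {u v w : V}
    (hin : 0 < g (.inr u) (.inl v)) (hout : 0 < g (.inr v) (.inl w)) :
    0 < g (.inl v) (.inr v) := by
  rcases eq_or_ne v s with rfl | hvs
  exacts [hg.pos_inner_of_pos_in hst hin, hg.pos_inner_of_pos_out hvs hout]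

theorem IsFlow.exists_isPath (hg : IsFlow (splitCap H s t) (.inr s) (.inl t) g)
    (hpos : 0 < ∑ y, g (.inr s) y) :
    ∃ w : H.Walk s t, w.IsPath ∧
      (∀ x y, s(x, y) ∈ w.edges → 0 < g (.inr x) (.inl y) + g (.inr y) (.inl x)) ∧
      ∀ v ∈ w.support, v ≠ s → v ≠ t → 0 < g (.inl v) (.inr v) := by
  let G := SimpleGraph.fromRel fun u v => 0 < g (.inr u) (.inl v)
  have hGH : G ≤ H := fun u v h => by
    obtain ⟨_, h | h⟩ := (SimpleGraph.fromRel_adj _ _ _).mp h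
    exacts [hg.adj_of_pos h, (hg.adj_of_pos h).symm]
  have hreach : G.Reachable s t := by
    rw [SimpleGraph.reachable_iff_reflTransGen]
    refine Relation.ReflTransGen.lift' (Sum.elim id id) (fun x y h => ?_) _ _
      (hg.reflTransGen_of_pos (splitCap_inr_source H s t) hpos)
    rcases x with v | u <;> rcases y with w | w
    · exact absurd (h.trans_le (hg.le_cap _ _)) (by simp [splitCap])
    · obtain rfl : v = w := by
        by_contra hvw
        exact absurd (h.trans_le (hg.le_cap _ _)) (by simp [splitCap, hvw])
      exact .refl
    · exact .single ((SimpleGraph.fromRel_adj _ _ _).mpr ⟨(hg.adj_of_pos h).ne, .inl h⟩)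
    · exact absurd (h.trans_le (hg.le_cap _ _)) (by simp [splitCap])
  let p := hreach.some.bypass
  refine ⟨p.mapLe hGH, (SimpleGraph.Walk.isPath_mapLe hGH).mpr hreach.some.bypass_isPath,
    fun x y hxy => ?_, fun v hv hvs hvt => ?_⟩
  · rw [SimpleGraph.Walk.edges_mapLe_eq_edges] at hxy
    obtain ⟨_, h | h⟩ := (SimpleGraph.fromRel_adj _ _ _).mp (p.adj_of_mem_edges hxy)
    all_goals omega
  · rw [SimpleGraph.Walk.support_mapLe_eq_support] at hv
    have hnil : ¬(p.takeUntil v hv).Nil := fun h => hvs h.eq.symm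
    obtain ⟨_, h | h⟩ :=
      (SimpleGraph.fromRel_adj _ _ _).mp (SimpleGraph.Walk.adj_penultimate hnil)
    exacts [hg.pos_inner_of_pos_in hvt h, hg.pos_inner_of_pos_out hvs h]

theorem IsFlow.exists_lt_of_pos_of_pos (hst : s ≠ t)
    (hg : IsFlow (splitCap H s t) (.inr s) (.inl t) g) {u v : V}
    (huv : 0 < g (.inr u) (.inl v)) (hvu : 0 < g (.inr v) (.inl u)) :
    ∃ g', IsFlow (splitCap H s t) (.inr s) (.inl t) g' ∧
      ∑ y, g' (.inr s) y = ∑ y, g (.inr s) y ∧ ∑ x, ∑ y, g' x y < ∑ x, ∑ y, g x y := by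
  have hne : u ≠ v := (hg.adj_of_pos huv).ne
  have hv := hg.pos_inner_of_pos_of_pos hst huv hvu
  have hu := hg.pos_inner_of_pos_of_pos hst hvu huv
  have hus := (hg.ne_of_pos_inner hu).1
  have hvs := (hg.ne_of_pos_inner hv).1
  -- remove one unit of flow around the cycle `u⁺ → v⁻ → v⁺ → u⁻ → u⁺`, which avoids `s⁺`
  let l : List (V ⊕ V) := [.inl v, .inr v, .inl u, .inr u]
  have hchain : (Sum.inr u :: l).IsChain fun x y => 0 < g x y := by simp [l, *]
  have hnd : (Sum.inr u :: l).dropLast.Nodup := by simp [l, hne, hne.symm]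
  have hle := List.arcCount_le_of_isChain hnd hchain
  have hcons : ∀ x, ∑ y, (Sum.inr u :: l).arcCount y x = ∑ y, (Sum.inr u :: l).arcCount x y :=
    fun x => by simpa [l] using (List.sum_arcCount_add_ite (.inr u) l x).symm
  refine ⟨_, hg.sub hle fun x _ _ => hcons x, ?_, ?_⟩
  · rw [sum_tsub_distrib _ fun y _ => hle _ y, List.sum_arcCount_right]
    simp [l, hus, hvs]
  · refine sum_lt_sum (fun x _ => sum_le_sum fun y _ => Nat.sub_le _ _) ⟨.inr u, mem_univ _,
      sum_lt_sum (fun y _ => Nat.sub_le _ _) ⟨.inl v, mem_univ _, ?_⟩⟩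
    have : 0 < (Sum.inr u :: l).arcCount (.inr u) (.inl v) :=
      List.arcCount_pos_iff.mpr (by simp [l])
    omega

theorem IsFlow.exists_add_le_one (hst : s ≠ t) {g₀ : V ⊕ V → V ⊕ V → ℕ}
    (hg₀ : IsFlow (splitCap H s t) (.inr s) (.inl t) g₀) :
    ∃ g, IsFlow (splitCap H s t) (.inr s) (.inl t) g ∧
      ∑ y, g (.inr s) y = ∑ y, g₀ (.inr s) y ∧
      ∀ u v, g (.inr u) (.inl v) + g (.inr v) (.inl u) ≤ 1 := by
  obtain ⟨g, ⟨hg, hval⟩, hmin⟩ :=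
    (measure fun g : V ⊕ V → V ⊕ V → ℕ => ∑ x, ∑ y, g x y).wf.has_min
      {g | IsFlow (splitCap H s t) (.inr s) (.inl t) g ∧
        ∑ y, g (.inr s) y = ∑ y, g₀ (.inr s) y}
      ⟨g₀, hg₀, rfl⟩
  refine ⟨g, hg, hval, fun u v => ?_⟩
  have huv := (hg.le_cap (.inr u) (.inl v)).trans (splitCap_inr_inl_le_one H s t u v)
  have hvu := (hg.le_cap (.inr v) (.inl u)).trans (splitCap_inr_inl_le_one H s t v u)
  by_contra
  obtain ⟨g', hg', hval', hlt⟩ :=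
    hg.exists_lt_of_pos_of_pos hst (u := u) (v := v) (by omega) (by omega)
  exact hmin g' ⟨hg', hval'.trans hval⟩ hlt

theorem exists_paths_of_decomposition (hg : IsFlow (splitCap H s t) (.inr s) (.inl t) g)
    (hload : ∀ u v, g (.inr u) (.inl v) + g (.inr v) (.inl u) ≤ 1) {n : ℕ}
    {φ : Fin n → V ⊕ V → V ⊕ V → ℕ}
    (hφ : ∀ i, IsFlow (splitCap H s t) (.inr s) (.inl t) (φ i) ∧ ∑ y, φ i (.inr s) y = 1)
    (hsum : ∀ x y, ∑ i, φ i x y ≤ g x y) :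
    ∃ f : Fin n → H.Walk s t, (∀ i, (f i).IsPath) ∧
      (∀ i j, i ≠ j → ∀ e, e ∈ (f i).edges → e ∉ (f j).edges) ∧
      ∀ v : V, v ≠ s → v ≠ t → {i | v ∈ (f i).support}.ncard ≤ 2 := by
  choose f hpath hedge hvert using
    fun i => (hφ i).1.exists_isPath (by rw [(hφ i).2]; exact one_pos)
  have hpair : ∀ i j, i ≠ j → ∀ x y, φ i x y + φ j x y ≤ g x y := fun i j hij x y =>
    (sum_pair hij).symm.trans_le ((sum_le_sum_of_subset (subset_univ _)).trans (hsum x y))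
  refine ⟨f, hpath, fun i j hij e hi hj => ?_, fun v hvs hvt => ?_⟩
  · induction e using Sym2.ind with
    | _ x y =>
      have := hedge i x y hi
      have := hedge j x y hj
      have := hpair i j hij (.inr x) (.inl y)
      have := hpair i j hij (.inr y) (.inl x)
      have := hload x y
      omega
  · calc {i | v ∈ (f i).support}.ncard ≤ #{i | 0 < φ i (.inl v) (.inr v)} := by
          rw [← Set.ncard_coe_finset]
          exact Set.ncard_le_ncard fun i hi => by simpa using hvert i v hi hvs hvt
      _ = ∑ i ∈ {i | 0 < φ i (.inl v) (.inr v)}, 1 := card_eq_sum_ones _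
      _ ≤ ∑ i, φ i (.inl v) (.inr v) := (sum_le_sum fun i hi => (mem_filter.mp hi).2).trans
          (sum_le_sum_of_subset (subset_univ _))
      _ ≤ 2 := (hsum _ _).trans ((hg.le_cap _ _).trans (splitCap_inl_inr_le_two H s t v v))

end SplitNetwork

section DeleteVerts

variable {V : Type*} {H : SimpleGraph V} {s t : V}

def SimpleGraph.deleteVerts (H : SimpleGraph V) (C : Finset V) : SimpleGraph V :=
  SimpleGraph.fromRel fun a b => H.Adj a b ∧ a ∉ C ∧ b ∉ C

theorem HasFlow.mono {G : SimpleGraph V} {u v : V} {m n : ℕ} (h : HasFlow G u v n)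
    (hmn : m ≤ n) : HasFlow G u v m := by
  obtain ⟨f, hf⟩ := h
  exact ⟨f ∘ Fin.castLE hmn, fun i j hij => hf _ _ ((Fin.castLE_injective hmn).ne hij)⟩

theorem SimpleGraph.Walk.exists_cut_edge (hst : s ≠ t) {C : Finset V} {S : Finset (V ⊕ V)}
    (hs : .inr s ∈ S) (ht : .inl t ∉ S) (hC : ∀ v ∉ C, v ≠ s → v ≠ t → .inl v ∈ S → .inr v ∈ S)
    (w : (H.deleteVerts C).Walk s t) :
    ∃ x y, s(x, y) ∈ w.edges ∧ H.Adj x y ∧ .inr x ∈ S ∧ .inl y ∉ S := by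
  obtain ⟨d, hd, hx, hy⟩ := w.exists_boundary_dart {x | x = s ∨ .inl x ∈ S} (.inl rfl)
    (by simp [hst.symm, ht])
  obtain ⟨_, ⟨hadj, hxC, -⟩ | ⟨hadj, -, hxC⟩⟩ := (SimpleGraph.fromRel_adj _ _ _).mp d.adj
  all_goals
    simp only [Set.mem_ofPred_eq, not_or] at hx hy
    refine ⟨d.fst, d.snd, List.mem_map_of_mem hd, by first | exact hadj | exact hadj.symm,
      ?_, hy.2⟩
    rcases hx with hxs | hxS
    · exact hxs ▸ hs
    · by_cases hxs : d.fst = s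
      · exact hxs ▸ hs
      · exact hC _ hxC hxs (by rintro rfl; exact ht hxS) hxS

theorem hasFlow_deleteVerts_of_ncard_le {n k : ℕ} (f : Fin n → H.Walk s t)
    (hdisj : ∀ i j, i ≠ j → ∀ e, e ∈ (f i).edges → e ∉ (f j).edges)
    (hload : ∀ v : V, v ≠ s → v ≠ t → {i | v ∈ (f i).support}.ncard ≤ k)
    (C : Finset V) (hs : s ∉ C) (ht : t ∉ C) : HasFlow (H.deleteVerts C) s t (n - k * #C) := by
  classical
  let good : Finset (Fin n) := {i | ∀ v ∈ C, v ∉ (f i).support}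
  have hbad : #goodᶜ ≤ k * #C :=
    calc #goodᶜ ≤ #(C.biUnion fun v => {i | v ∈ (f i).support}) :=
          card_le_card fun i hi => by simpa [good] using hi
      _ ≤ ∑ v ∈ C, #{i | v ∈ (f i).support} := card_biUnion_le
      _ ≤ ∑ v ∈ C, k := sum_le_sum fun v hv => by
          simpa [← Set.ncard_coe_finset] using
            hload v (ne_of_mem_of_not_mem hv hs) (ne_of_mem_of_not_mem hv ht)
      _ = k * #C := by rw [sum_const, smul_eq_mul, mul_comm]
  have hgood : n - k * #C ≤ #good := by
    rw [card_compl, Fintype.card_fin] at hbad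
    omega
  have hedges : ∀ i ∈ good, ∀ e ∈ (f i).edges, e ∈ (H.deleteVerts C).edgeSet :=
    fun i hi e he => by
      induction e using Sym2.ind with
      | _ x y =>
        simp only [good, mem_filter_univ] at hi
        have hxy := (f i).adj_of_mem_edges he
        rw [SimpleGraph.mem_edgeSet, SimpleGraph.deleteVerts, SimpleGraph.fromRel_adj]
        exact ⟨hxy.ne, .inl ⟨hxy, fun hx => hi x hx ((f i).fst_mem_support_of_mem_edges he),
          fun hy => hi y hy ((f i).snd_mem_support_of_mem_edges he)⟩⟩
  refine HasFlow.mono ⟨fun j => (f (good.equivFin.symm j)).transfer _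
    (hedges _ (good.equivFin.symm j).2), fun j j' hjj' e hj hj' => ?_⟩ hgood
  rw [SimpleGraph.Walk.edges_transfer] at hj hj'
  exact hdisj _ _ (Subtype.val_injective.ne (good.equivFin.symm.injective.ne hjj')) e hj hj'

variable [Fintype V] [DecidableEq V] [DecidableRel H.Adj]

theorem two_mul_card_add_le_sum_splitCap (hst : s ≠ t) {S : Finset (V ⊕ V)}
    (hs : .inr s ∈ S) (ht : .inl t ∉ S) {C : Finset V}
    (hCS : ∀ v ∈ C, v ≠ s ∧ v ≠ t ∧ .inl v ∈ S ∧ .inr v ∉ S)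
    (hC : ∀ v ∉ C, v ≠ s → v ≠ t → .inl v ∈ S → .inr v ∈ S) {m : ℕ}
    (f : Fin m → (H.deleteVerts C).Walk s t)
    (hdisj : ∀ i j, i ≠ j → ∀ e, e ∈ (f i).edges → e ∉ (f j).edges) :
    2 * #C + m ≤ ∑ x ∈ S, ∑ y ∈ Sᶜ, splitCap H s t x y := by
  choose x y hmem hadj hx hy using fun k => (f k).exists_cut_edge hst hs ht hC
  have hinj : Function.Injective fun k => ((.inr (x k), .inl (y k)) : (V ⊕ V) × (V ⊕ V)) :=
    fun i j h => by
      by_contra hij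
      simp only [Prod.mk.injEq, Sum.inr.injEq, Sum.inl.injEq] at h
      exact hdisj i j hij _ (hmem i) (h.1 ▸ h.2 ▸ hmem j)
  let F₁ := C.image fun v => ((.inl v, .inr v) : (V ⊕ V) × (V ⊕ V))
  let F₂ := univ.image fun k => ((.inr (x k), .inl (y k)) : (V ⊕ V) × (V ⊕ V))
  have hF₁ : ∑ p ∈ F₁, splitCap H s t p.1 p.2 = 2 * #C := by
    rw [sum_image fun _ _ _ _ h => Sum.inl_injective (congrArg Prod.fst h), mul_comm,
      ← smul_eq_mul, ← sum_const]
    exact sum_congr rfl fun v hv => by simp [splitCap, (hCS v hv).1, (hCS v hv).2.1]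
  have hF₂ : ∑ p ∈ F₂, splitCap H s t p.1 p.2 = m := by
    rw [sum_image hinj.injOn]
    simp [splitCap, hadj]
  have hdisjF : Disjoint F₁ F₂ := by simp [F₁, F₂, disjoint_left]
  calc 2 * #C + m = ∑ p ∈ F₁ ∪ F₂, splitCap H s t p.1 p.2 := by
        rw [sum_union hdisjF, hF₁, hF₂]
    _ ≤ ∑ p ∈ S ×ˢ Sᶜ, splitCap H s t p.1 p.2 := by
      refine sum_le_sum_of_subset (union_subset ?_ ?_) <;> intro p hp
      · obtain ⟨v, hv, rfl⟩ := mem_image.mp hp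
        simp [(hCS v hv).2.2]
      · obtain ⟨k, -, rfl⟩ := mem_image.mp hp
        simp [hx k, hy k]
    _ = ∑ x ∈ S, ∑ y ∈ Sᶜ, splitCap H s t x y := sum_product _ _ _

theorem le_sum_splitCap_of_hasFlow (hst : s ≠ t) {ℓ : ℕ}
    (hyp : ∀ C : Finset V, s ∉ C → t ∉ C → #C < ℓ →
      HasFlow (H.deleteVerts C) s t (2 * (ℓ - #C)))
    (S : Finset (V ⊕ V)) (hs : .inr s ∈ S) (ht : .inl t ∉ S) :
    2 * ℓ ≤ ∑ x ∈ S, ∑ y ∈ Sᶜ, splitCap H s t x y := by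
  let C : Finset V := {v | v ≠ s ∧ v ≠ t ∧ .inl v ∈ S ∧ .inr v ∉ S}
  have hCS : ∀ v ∈ C, v ≠ s ∧ v ≠ t ∧ .inl v ∈ S ∧ .inr v ∉ S := by simp [C]
  have hC : ∀ v ∉ C, v ≠ s → v ≠ t → .inl v ∈ S → .inr v ∈ S := by simp +contextual [C]
  rcases le_or_gt ℓ #C with hℓ | hℓ
  · have := two_mul_card_add_le_sum_splitCap (H := H) hst hs ht hCS hC
      (Fin.elim0 : Fin 0 → _) fun i => i.elim0
    omega
  · obtain ⟨f, hf⟩ := hyp C (by simp [C]) (by simp [C]) hℓ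
    have := two_mul_card_add_le_sum_splitCap hst hs ht hCS hC f hf
    omega

end DeleteVerts

theorem ekm_condition_iff_capacitated_flow_general
    {V : Type*} [Fintype V]
    (H : SimpleGraph V) (s t : V) (hst : s ≠ t) (ℓ : ℕ) :
    (∀ C : Finset V, s ∉ C → t ∉ C → C.card < ℓ →
        HasFlow (SimpleGraph.fromRel fun a b => H.Adj a b ∧ a ∉ C ∧ b ∉ C) s t
          (2 * (ℓ - C.card))) ↔
      ∃ f : Fin (2 * ℓ) → H.Walk s t, (∀ i, (f i).IsPath) ∧
        (∀ i j, i ≠ j → ∀ e, e ∈ (f i).edges → e ∉ (f j).edges) ∧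
        (∀ v : V, v ≠ s → v ≠ t → {i : Fin (2 * ℓ) | v ∈ (f i).support}.ncard ≤ 2) := by
  classical
  constructor
  · intro hyp
    obtain ⟨g₀, hg₀, hval₀⟩ := exists_isFlow_of_le_cut Sum.inr_ne_inl
      (splitCap_inr_source H s t) (le_sum_splitCap_of_hasFlow hst hyp)
    obtain ⟨g, hg, hval, hload⟩ := hg₀.exists_add_le_one hst
    obtain ⟨φ, hφ, hsum⟩ :=
      hg.exists_decomposition Sum.inr_ne_inl (splitCap_inr_source H s t) (hval.trans hval₀)
    exact exists_paths_of_decomposition hg hload hφ hsum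
  · rintro ⟨f, -, hdisj, hload⟩ C hs ht -
    exact (hasFlow_deleteVerts_of_ncard_le f hdisj hload C hs ht).mono (by omega)

/-- `λ_{H∖C}(s,t) ≥ 2(ℓ − |C|)` holds for every `C ⊆ V ∖ {s,t}` with
`|C| < ℓ` iff `H` contains `2ℓ` pairwise edge-disjoint `s`–`t` paths such that every
vertex `v ∈ V ∖ {s,t}` belongs to at most `2` of them. -/
theorem ekm_condition_iff_capacitated_flow
    {V : Type*} [Fintype V] [DecidableEq V]
    (H : SimpleGraph V) (s t : V) (hst : s ≠ t) (ℓ : ℕ) (hℓ : 1 ≤ ℓ) :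
    (∀ C : Finset V, s ∉ C → t ∉ C → C.card < ℓ →
        HasFlow (SimpleGraph.fromRel fun a b => H.Adj a b ∧ a ∉ C ∧ b ∉ C) s t
          (2 * (ℓ - C.card))) ↔
      ∃ f : Fin (2 * ℓ) → H.Walk s t, (∀ i, (f i).IsPath) ∧
        (∀ i j, i ≠ j → ∀ e, e ∈ (f i).edges → e ∉ (f j).edges) ∧
        (∀ v : V, v ≠ s → v ≠ t → {i : Fin (2 * ℓ) | v ∈ (f i).support}.ncard ≤ 2) :=
  ekm_condition_iff_capacitated_flow_general H s t hst ℓ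
end
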